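/- arXiv:2010.00930 — 4 statements merged into one kernel-verified Lean document; each statement's English description precedes it below -/
import Mathlib

section
/- Let T ∈ T^(m)(n) have nonzero contribution, i.e. r_S(T) ≠ 0. Then every maximal S-cadet sequence of T of size greater than 1 intersects some other maximal S-cadet sequence of T. -/
open scoped Classical

/-- The derived sets `S⁻ᵢⱼ` of nonnegative integers:
for `i < j`, `S⁻ᵢⱼ = {s ≥ 0 : -s ∈ Sᵢⱼ}`, and `S⁻ⱼᵢ = {0} ∪ {s > 0 : s ∈ Sᵢⱼ}`. -/
def Sminus {n : ℕ} (S : Fin n → Fin n → Finset ℤ) (i j : Fin n) : Set ℕ :=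
  if i < j then {s : ℕ | -(s : ℤ) ∈ S i j}
  else {0} ∪ {s : ℕ | 0 < s ∧ (s : ℤ) ∈ S j i}

/-- `m`: the maximal absolute value of an element of some `S i j` (`i < j`). -/
def mOf {n : ℕ} (S : Fin n → Fin n → Finset ℤ) : ℕ :=
  Finset.univ.sup fun p : Fin n × Fin n =>
    if p.1 < p.2 then (S p.1 p.2).sup (fun s => s.natAbs) else 0

/-- A rooted labeled plane tree with `n` nodes (labeled by `Fin n`, index `i` representing
the label `i+1`, so the node `1` is `(0 : Fin n)`), each node having exactly `m+1`
linearly ordered children; children that are not nodes are unlabeled leaves and carry no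
further data. `parent v` is the parent node of the node `v` (with the convention
`parent root = root`), and `pos v` is the position of `v` among the `m+1` children of its
parent, so `(pos v : ℕ)` is the number `lsib v` of left siblings of `v`. -/
structure PlaneTree (n m : ℕ) where
  root : Fin n
  parent : Fin n → Fin n
  pos : Fin n → Fin (m + 1)
  parent_root : parent root = root
  reaches_root : ∀ v : Fin n, ∃ k : ℕ, parent^[k] v = root
  pos_inj : ∀ v w : Fin n, v ≠ root → w ≠ root → parent v = parent w → pos v = pos w → v = w

namespace PlaneTree

variable {n m : ℕ}

/-- `v` is a child of `u` (among the nodes). -/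
def IsChild (T : PlaneTree n m) (v u : Fin n) : Prop :=
  v ≠ T.root ∧ T.parent v = u

/-- `v` is the cadet of `u`: the rightmost child of `u` that is a node. -/
def IsCadet (T : PlaneTree n m) (u v : Fin n) : Prop :=
  T.IsChild v u ∧ ∀ w : Fin n, T.IsChild w u → T.pos w ≤ T.pos v

/-- The number of left siblings of `v`. -/
def lsib (T : PlaneTree n m) (v : Fin n) : ℕ := (T.pos v : ℕ)

end PlaneTree

/-- `(v a, v (a+1), …, v b)` is a cadet sequence of `T` (1-indexed, `1 ≤ a ≤ b`). -/
def IsCadetWindow {n m : ℕ} (T : PlaneTree n m) (v : ℕ → Fin n) (a b : ℕ) : Prop :=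
  1 ≤ a ∧ a ≤ b ∧ ∀ p : ℕ, a < p → p ≤ b → T.IsCadet (v (p - 1)) (v p)

/-- `v` is injective on the indices `a, …, b`. -/
def WindowInj {n : ℕ} (v : ℕ → Fin n) (a b : ℕ) : Prop :=
  ∀ p q : ℕ, a ≤ p → p ≤ b → a ≤ q → q ≤ b → v p = v q → p = q

/-- `(v a, …, v b)` is an `S`-cadet sequence of `T`. -/
def IsSCadetWindow {n m : ℕ} (S : Fin n → Fin n → Finset ℤ) (T : PlaneTree n m)
    (v : ℕ → Fin n) (a b : ℕ) : Prop :=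
  IsCadetWindow T v a b ∧
    ∀ i j : ℕ, a ≤ i → i < j → j ≤ b →
      (∑ p ∈ Finset.Icc (i + 1) j, T.lsib (v p)) ∉ Sminus S (v i) (v j)

/-- `(v 1, …, v k)` is a maximal cadet sequence of `T`: all children of `v k` are
leaves, and no node has `v 1` as its cadet. -/
def IsMaxCadetSeq {n m : ℕ} (T : PlaneTree n m) (k : ℕ) (v : ℕ → Fin n) : Prop :=
  IsCadetWindow T v 1 k ∧ (∀ w : Fin n, ¬ T.IsChild w (v k)) ∧ ∀ u : Fin n, ¬ T.IsCadet u (v 1)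

/-- `(v a, …, v b)` is a maximal `S`-cadet sequence inside the ambient cadet sequence
`(v 1, …, v k)`. -/
def IsMaxSCadetWindow {n m : ℕ} (S : Fin n → Fin n → Finset ℤ) (T : PlaneTree n m)
    (k : ℕ) (v : ℕ → Fin n) (a b : ℕ) : Prop :=
  b ≤ k ∧ IsSCadetWindow S T v a b ∧
    (a = 1 ∨ ¬ IsSCadetWindow S T v (a - 1) b) ∧
    (b = k ∨ ¬ IsSCadetWindow S T v a (b + 1))

/-- `Y` is (the set of nodes of) a maximal `S`-cadet sequence of `T`. -/
def IsMaxSCadetSet {n m : ℕ} (S : Fin n → Fin n → Finset ℤ) (T : PlaneTree n m)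
    (Y : Finset (Fin n)) : Prop :=
  ∃ (k : ℕ) (v : ℕ → Fin n) (a b : ℕ), IsMaxCadetSeq T k v ∧ WindowInj v 1 k ∧
    IsMaxSCadetWindow S T k v a b ∧ Y = (Finset.Icc a b).image v

/-- `Y` is (the set of nodes of) a nonempty cadet sequence of `T`. -/
def IsCadetSeqSet {n m : ℕ} (T : PlaneTree n m) (Y : Finset (Fin n)) : Prop :=
  ∃ (k : ℕ) (v : ℕ → Fin n), IsCadetWindow T v 1 k ∧ WindowInj v 1 k ∧
    Y = (Finset.Icc 1 k).image v

/-- `X` is (the set of nodes of) an `S`-connected cadet sequence of `T`: it is a cadet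
sequence, every maximal `S`-cadet sequence is disjoint from it or contained in it, and no
cadet sequence with this property is properly contained in it. -/
def SConnected {n m : ℕ} (S : Fin n → Fin n → Finset ℤ) (T : PlaneTree n m)
    (X : Finset (Fin n)) : Prop :=
  IsCadetSeqSet T X ∧
    (∀ Y, IsMaxSCadetSet S T Y → X ∩ Y = ∅ ∨ Y ⊆ X) ∧
    ∀ X', IsCadetSeqSet T X' → (∀ Y, IsMaxSCadetSet S T Y → X' ∩ Y = ∅ ∨ Y ⊆ X') →
      X' ⊆ X → X' = X

/-- `Y` is (the set of nodes of) an `S`-cadet sequence of `T` (a possible box). -/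
def IsSBox {n m : ℕ} (S : Fin n → Fin n → Finset ℤ) (T : PlaneTree n m)
    (Y : Finset (Fin n)) : Prop :=
  ∃ (k : ℕ) (v : ℕ → Fin n), IsSCadetWindow S T v 1 k ∧ WindowInj v 1 k ∧
    Y = (Finset.Icc 1 k).image v

/-- `B` is an `S`-boxing of the set of nodes `X`: a partition of `X` into
`S`-cadet sequences. -/
def IsSBoxingOf {n m : ℕ} (S : Fin n → Fin n → Finset ℤ) (T : PlaneTree n m)
    (X : Finset (Fin n)) (B : Finset (Finset (Fin n))) : Prop :=
  (∀ Y ∈ B, IsSBox S T Y ∧ Y ⊆ X) ∧ ∀ u ∈ X, ∃! Y, Y ∈ B ∧ u ∈ Y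

/-- The contribution `r_S(X)` of a cadet sequence with (injective) node set `X`
(whose length is `X.card`): `∑_{B ∈ U_S(X)} (-1)^(|X| - |B|)`. -/
noncomputable def contrib {n m : ℕ} (S : Fin n → Fin n → Finset ℤ) (T : PlaneTree n m)
    (X : Finset (Fin n)) : ℤ :=
  ∑ B : Finset (Finset (Fin n)),
    if IsSBoxingOf S T X B then (-1 : ℤ) ^ (X.card - B.card) else 0

/-- The contribution `r_S(T) = ∑_{B ∈ U_S(T)} (-1)^(n - |B|)` of the tree `T`. -/
noncomputable def treeContrib {n m : ℕ} (S : Fin n → Fin n → Finset ℤ)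
    (T : PlaneTree n m) : ℤ :=
  contrib S T Finset.univ

/-- The tuple `S` is transitive. -/
def TransitiveS {n : ℕ} (S : Fin n → Fin n → Finset ℤ) : Prop :=
  ∀ i j k : Fin n, i ≠ j → j ≠ k → i ≠ k →
    ∀ s t : ℕ, s ∉ Sminus S i j → t ∉ Sminus S j k → s + t ∉ Sminus S i k

/-- The arrangement `A_S` is almost transitive (`(i : ℕ) = 0` encodes "`i` is the node `1`"). -/
def AlmostTransitive {n : ℕ} (S : Fin n → Fin n → Finset ℤ) : Prop :=
  ∀ i j k : Fin n, i ≠ j → j ≠ k → i ≠ k → (i : ℕ) ≠ 0 → (k : ℕ) ≠ 0 →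
    ∀ s t : ℕ, s ∉ Sminus S i j → t ∉ Sminus S j k → s + t ∉ Sminus S i k

/-- `A_S` is an Ish-type arrangement: `0 ∈ Sᵢⱼ` for all `i < j`, and `Sᵢⱼ = {0}`
whenever `1 < i < j`. -/
def IshType {n : ℕ} (S : Fin n → Fin n → Finset ℤ) : Prop :=
  (∀ i j : Fin n, i < j → (0 : ℤ) ∈ S i j) ∧
    ∀ i j : Fin n, 0 < (i : ℕ) → i < j → S i j = {0}

/-- `A_S` is a nested Ish arrangement. -/
def NestedIsh {n : ℕ} (S : Fin n → Fin n → Finset ℤ) : Prop :=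
  IshType S ∧ ∀ i j k : Fin n, (i : ℕ) = 0 → 0 < (j : ℕ) → j < k → S i j ⊆ S i k

/-- The lower inefficiency `E_l(T)`: the number of lower inefficient nodes of `T`,
i.e. nodes `w` that are left siblings of the node `1` with `lsib w ∉ S⁻_{w,1}`. -/
noncomputable def Elow {n m : ℕ} [NeZero n] (S : Fin n → Fin n → Finset ℤ)
    (T : PlaneTree n m) : ℕ :=
  (Finset.univ.filter fun w : Fin n =>
    w ≠ T.root ∧ (0 : Fin n) ≠ T.root ∧ T.parent w = T.parent 0 ∧ T.pos w < T.pos 0 ∧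
      T.lsib w ∉ Sminus S w 0).card

/-- The upper inefficiency `E_u(T)`: the number of upper inefficient nodes of `T`,
i.e. nodes `w` with parent the node `1` that are not the cadet of `1`, with
`lsib w ∉ S⁻_{1,w}`. -/
noncomputable def Eup {n m : ℕ} [NeZero n] (S : Fin n → Fin n → Finset ℤ)
    (T : PlaneTree n m) : ℕ :=
  (Finset.univ.filter fun w : Fin n =>
    T.IsChild w 0 ∧ ¬ T.IsCadet 0 w ∧ T.lsib w ∉ Sminus S 0 w).card

/-- The class `S(e_l, ℓ_l, e_u, ℓ_u)` of trees in `T^(m)(n)` with nonzero contribution,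
lower/upper inefficiencies `e_l, e_u` and lower/upper 1-lengths `ℓ_l, ℓ_u` (the latter
expressed via the maximal `S`-cadet sequence `{v_{j-ℓ_l}, …, v_j, …, v_{j+ℓ_u}}`
around the node `1 = v j` inside its maximal cadet sequence `(v 1, …, v t)`). -/
def ClassS {n : ℕ} [NeZero n] (S : Fin n → Fin n → Finset ℤ) (el ll eu lu : ℕ) :
    Set (PlaneTree n (mOf S)) :=
  {T | treeContrib S T ≠ 0 ∧ Elow S T = el ∧ Eup S T = eu ∧
    ∃ (t : ℕ) (v : ℕ → Fin n) (j : ℕ), IsMaxCadetSeq T t v ∧ WindowInj v 1 t ∧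
      1 ≤ j ∧ j ≤ t ∧ v j = 0 ∧ ll < j ∧ j + lu ≤ t ∧
      IsMaxSCadetWindow S T t v (j - ll) (j + lu)}

/-- The complement in `ℝ^n` of the union of the hyperplanes `xᵢ - xⱼ = s`
(`i < j`, `s ∈ S i j`) of the arrangement `A_S`. -/
def complementSet {n : ℕ} (S : Fin n → Fin n → Finset ℤ) : Set (Fin n → ℝ) :=
  {x | ∀ i j : Fin n, i < j → ∀ s ∈ S i j, x i - x j ≠ (s : ℝ)}

/-- The number of regions `r_S` of the arrangement `A_S`: the number of connected
components of the complement of its hyperplanes. -/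
noncomputable def numRegions {n : ℕ} (S : Fin n → Fin n → Finset ℤ) : ℕ :=
  Nat.card (ConnectedComponents ↥(complementSet S))

/-- A rooted labeled plane tree with `n` nodes and arbitrary numbers of children:
`nchild u` is the total number of (linearly ordered) children of the node `u`, and
`pos v` the position of the node `v` among the children of its parent (so
`lsib v = pos v` and `rsib v = nchild (parent v) - 1 - pos v`). Children not occupied
by nodes are unlabeled leaves. -/
structure LPTree (n : ℕ) where
  root : Fin n
  parent : Fin n → Fin n
  pos : Fin n → ℕ
  nchild : Fin n → ℕ
  parent_root : parent root = root
  reaches_root : ∀ v : Fin n, ∃ k : ℕ, parent^[k] v = root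
  pos_lt : ∀ v : Fin n, v ≠ root → pos v < nchild (parent v)
  pos_inj : ∀ v w : Fin n, v ≠ root → w ≠ root → parent v = parent w → pos v = pos w → v = w

/-- Membership in the set `𝔗(S)`: the root is the node `1`, the node `1` has `2m+2`
children, every other node has exactly one child, and every node `k ≠ 1` satisfies
`lsib k ∈ S⁻₁ₖ` or `rsib k ∈ S⁻ₖ₁`. -/
def IsFrakT {n : ℕ} [NeZero n] (S : Fin n → Fin n → Finset ℤ) (T : LPTree n) : Prop :=
  T.root = 0 ∧ T.nchild 0 = 2 * mOf S + 2 ∧ (∀ v : Fin n, v ≠ 0 → T.nchild v = 1) ∧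
    ∀ v : Fin n, v ≠ 0 →
      (T.pos v ∈ Sminus S 0 v ∨ (T.nchild (T.parent v) - 1 - T.pos v) ∈ Sminus S v 0)

/-- For an `S`-connected cadet sequence `(v 1, …, v k)` whose maximal `S`-cadet
sequences are the windows `[a r, b r]` (`1 ≤ r ≤ k'`, in increasing order of last index),
`LastIdx a b k' j` is the index of the largest-indexed node of `X_j \ X_{j+1}`
(with `X_{k'+1} = {0}` containing no node of the sequence). -/
def LastIdx (a b : ℕ → ℕ) (k' j : ℕ) : ℕ :=
  ((Finset.Icc (a j) (b j)) \
    (if j = k' then (∅ : Finset ℕ) else Finset.Icc (a (j + 1)) (b (j + 1)))).sup id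

/-- `X_i` reaches `X_j`: the parent of the largest-indexed node of `X_j \ X_{j+1}`
belongs to `X_i`, with the conventions `X_0 = {0}`, `parent (v 1) = 0`
(the index `0` plays the role of `X_0`). -/
def Reaches (a b : ℕ → ℕ) (k' i j : ℕ) : Prop :=
  i < j ∧ j ≤ k' ∧
    ((i = 0 ∧ LastIdx a b k' j = 1) ∨
      (1 ≤ i ∧ 2 ≤ LastIdx a b k' j ∧ a i ≤ LastIdx a b k' j - 1 ∧
        LastIdx a b k' j - 1 ≤ b i))

/-- A successful run of the algorithm: `idx 0 = 0`; at each step, the next term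
`idx (j+1)` is the smallest-indexed maximal `S`-cadet sequence reached by `X_{idx j}`
but not reached by any `X_{idx l}` with `l < j`; the run terminates at `k'`
after `t` steps. -/
def AlgRun (a b : ℕ → ℕ) (k' t : ℕ) (idx : ℕ → ℕ) : Prop :=
  idx 0 = 0 ∧ idx t = k' ∧ (∀ j, j < t → idx j ≠ k') ∧
    ∀ j, j < t →
      Reaches a b k' (idx j) (idx (j + 1)) ∧
        (∀ l, l < j → ¬ Reaches a b k' (idx l) (idx (j + 1))) ∧
        ∀ r, r < idx (j + 1) → Reaches a b k' (idx j) r → ∃ l, l < j ∧ Reaches a b k' (idx l) r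

/-- Condition (2) of Proposition 4.5 (with lower 1-length `i` and upper 1-length `k`),
for the maximal cadet sequence `(v 1, …, v t)` containing the node `1 = v j`. -/
def Cond9 {n m : ℕ} (S : Fin n → Fin n → Finset ℤ) (T : PlaneTree n m)
    (t : ℕ) (v : ℕ → Fin n) (j i k : ℕ) : Prop :=
  i < j ∧ k ≤ t - j ∧
    (∀ s : ℕ, 1 ≤ s → s ≤ t → (s < j - i - 1 ∨ j + k + 1 < s) →
      IsMaxSCadetWindow S T t v s s) ∧
    IsMaxSCadetWindow S T t v (j - i) (j + k) ∧
    (j - i ≠ 1 → IsMaxSCadetWindow S T t v (j - i - 1) (j - 1)) ∧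
    (j - i = 1 → i = 0) ∧
    (j + k ≠ t → IsMaxSCadetWindow S T t v (j + 1) (j + k + 1)) ∧
    (j + k = t → k = 0) ∧
    ∀ a' b' : ℕ, IsMaxSCadetWindow S T t v a' b' →
      ((a' = b' ∧ (a' < j - i - 1 ∨ j + k + 1 < a')) ∨ (a' = j - i ∧ b' = j + k) ∨
        (j - i ≠ 1 ∧ a' = j - i - 1 ∧ b' = j - 1) ∨ (j + k ≠ t ∧ a' = j + 1 ∧ b' = j + k + 1))

/-!
Suppose the maximal `S`-cadet sequence `(v a, …, v b)`, `a < b`, met no other maximal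
`S`-cadet sequence. Then every `S`-cadet sequence through one of its nodes lies inside it, so in
any `S`-boxing the box of `v a` starts at `v a`: either it also contains `v (a + 1)`, and we
split off `{v a}`, or it is `{v a}`, and we merge it with the box of `v (a + 1)`. This toggle
is a sign-reversing involution on `S`-boxings, hence `r_S(T) = 0`.
-/

/-- `IsSBoxingOf S T` is `IsBlockPartition (IsSBox S T)`. -/
def IsBlockPartition {α : Type*} (P : Finset α → Prop) (X : Finset α)
    (B : Finset (Finset α)) : Prop :=
  (∀ Y ∈ B, P Y ∧ Y ⊆ X) ∧ ∀ u ∈ X, ∃! Y, Y ∈ B ∧ u ∈ Y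

section BlockPartition

open Finset

variable {α : Type*} {P : Finset α → Prop} {X A : Finset α} {B C D : Finset (Finset α)} {u : α}

lemma IsBlockPartition.eq_of_mem (hB : IsBlockPartition P X B) {A A' : Finset α} (hA : A ∈ B)
    (hA' : A' ∈ B) (hu : u ∈ A) (hu' : u ∈ A') : A = A' :=
  (hB.2 u ((hB.1 A hA).2 hu)).unique ⟨hA, hu⟩ ⟨hA', hu'⟩

lemma isBlockPartition_singleton (h : P A) : IsBlockPartition P A {A} :=
  ⟨fun Y hY => by obtain rfl := mem_singleton.1 hY; exact ⟨h, subset_rfl⟩,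
    fun u hu => ⟨A, ⟨mem_singleton_self A, hu⟩, fun Y hY => mem_singleton.1 hY.1⟩⟩

variable [DecidableEq α]

noncomputable def blockOf (B : Finset (Finset α)) (u : α) : Finset α :=
  (B.filter (u ∈ ·)).sup id

lemma isBlockPartition_pair {A A' : Finset α} (h : P A) (h' : P A') (hd : Disjoint A A') :
    IsBlockPartition P (A ∪ A') {A, A'} := by
  refine ⟨fun Y hY => ?_, fun u hu => ?_⟩
  · rw [mem_insert, mem_singleton] at hY
    rcases hY with rfl | rfl
    · exact ⟨h, subset_union_left⟩
    · exact ⟨h', subset_union_right⟩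
  · rcases mem_union.1 hu with huA | huA'
    · refine ⟨A, ⟨mem_insert_self _ _, huA⟩, fun Y ⟨hY, huY⟩ => ?_⟩
      rw [mem_insert, mem_singleton] at hY
      rcases hY with rfl | rfl
      · rfl
      · exact absurd huY (disjoint_left.1 hd huA)
    · refine ⟨A', ⟨mem_insert_of_mem (mem_singleton_self _), huA'⟩, fun Y ⟨hY, huY⟩ => ?_⟩
      rw [mem_insert, mem_singleton] at hY
      rcases hY with rfl | rfl
      · exact absurd huA' (disjoint_left.1 hd huY)
      · rfl

namespace IsBlockPartition

lemma blockOf_eq (hB : IsBlockPartition P X B) (hA : A ∈ B) (hu : u ∈ A) : blockOf B u = A := by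
  have : B.filter (u ∈ ·) = {A} := by
    ext Y
    simp only [mem_filter, mem_singleton]
    exact ⟨fun ⟨hY, huY⟩ => hB.eq_of_mem hY hA huY hu, by rintro rfl; exact ⟨hA, hu⟩⟩
  rw [blockOf, this, sup_singleton, id]

lemma blockOf_mem_and_mem (hB : IsBlockPartition P X B) (hu : u ∈ X) :
    blockOf B u ∈ B ∧ u ∈ blockOf B u := by
  obtain ⟨A, ⟨hA, huA⟩, -⟩ := hB.2 u hu
  rw [hB.blockOf_eq hA huA]
  exact ⟨hA, huA⟩

lemma card_le (hB : IsBlockPartition P X B) (hP : ¬ P ∅) : B.card ≤ X.card := by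
  refine card_le_card_of_surjOn (blockOf B) fun A hA => ?_
  obtain ⟨u, hu⟩ := nonempty_iff_ne_empty.2 fun h => hP (h ▸ (hB.1 A hA).1)
  exact ⟨u, (hB.1 A hA).2 hu, hB.blockOf_eq hA hu⟩

lemma replace (hB : IsBlockPartition P X B) (hC : C ⊆ B)
    (hD : IsBlockPartition P (C.biUnion id) D) : IsBlockPartition P X (B \ C ∪ D) := by
  have hCX : C.biUnion id ⊆ X := biUnion_subset.2 fun A hA => (hB.1 A (hC hA)).2
  refine ⟨fun Y hY => ?_, fun u hu => ?_⟩
  · rcases mem_union.1 hY with hY | hY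
    · exact hB.1 Y (mem_sdiff.1 hY).1
    · exact ⟨(hD.1 Y hY).1, (hD.1 Y hY).2.trans hCX⟩
  by_cases huC : u ∈ C.biUnion id
  · obtain ⟨Y, ⟨hYD, huY⟩, hYuniq⟩ := hD.2 u huC
    refine ⟨Y, ⟨mem_union_right _ hYD, huY⟩, fun Z ⟨hZ, huZ⟩ => ?_⟩
    rcases mem_union.1 hZ with hZ | hZ
    · obtain ⟨W, hWC, huW⟩ := mem_biUnion.1 huC
      exact absurd (hB.eq_of_mem (mem_sdiff.1 hZ).1 (hC hWC) huZ huW ▸ hWC) (mem_sdiff.1 hZ).2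
    · exact hYuniq Z ⟨hZ, huZ⟩
  · obtain ⟨Y, ⟨hYB, huY⟩, hYuniq⟩ := hB.2 u hu
    have hYC : Y ∉ C := fun h => huC (mem_biUnion.2 ⟨Y, h, huY⟩)
    refine ⟨Y, ⟨mem_union_left _ (mem_sdiff.2 ⟨hYB, hYC⟩), huY⟩, fun Z ⟨hZ, huZ⟩ => ?_⟩
    rcases mem_union.1 hZ with hZ | hZ
    · exact hYuniq Z ⟨(mem_sdiff.1 hZ).1, huZ⟩
    · exact absurd ((hD.1 Z hZ).2 huZ) huC

lemma disjoint_replace (hB : IsBlockPartition P X B) (hP : ¬ P ∅) (hC : C ⊆ B)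
    (hD : IsBlockPartition P (C.biUnion id) D) : Disjoint (B \ C) D := by
  refine disjoint_left.2 fun Y hY hYD => ?_
  obtain ⟨u, hu⟩ := nonempty_iff_ne_empty.2 fun h => hP (h ▸ (hD.1 Y hYD).1)
  obtain ⟨W, hWC, huW⟩ := mem_biUnion.1 ((hD.1 Y hYD).2 hu)
  exact (mem_sdiff.1 hY).2 (hB.eq_of_mem (mem_sdiff.1 hY).1 (hC hWC) hu huW ▸ hWC)

end IsBlockPartition

lemma card_replace_add (hC : C ⊆ B) (hD : Disjoint (B \ C) D) :
    (B \ C ∪ D).card + C.card = B.card + D.card := by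
  rw [card_union_of_disjoint hD, card_sdiff_of_subset hC]
  have := card_le_card hC
  omega

lemma replace_replace (hC : C ⊆ B) (hD : Disjoint (B \ C) D) : (B \ C ∪ D) \ D ∪ C = B := by
  ext Y
  have hYD : Y ∈ B \ C → Y ∉ D := fun h => disjoint_left.1 hD h
  have hYC : Y ∈ C → Y ∈ B := fun h => hC h
  simp only [mem_union, mem_sdiff] at hYD hYC ⊢
  tauto

end BlockPartition

section SplitOrMerge

open Finset

variable {α : Type*} [DecidableEq α] {P : Finset α → Prop} {X A A' : Finset α}
  {B : Finset (Finset α)} {x y : α}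

noncomputable def splitOrMerge (x y : α) (B : Finset (Finset α)) : Finset (Finset α) :=
  if y ∈ blockOf B x then B \ {blockOf B x} ∪ {{x}, (blockOf B x).erase x}
  else B \ {blockOf B x, blockOf B y} ∪ {blockOf B x ∪ blockOf B y}

namespace IsBlockPartition

lemma splitOrMerge_of_mem (hB : IsBlockPartition P X B) (hP : ¬ P ∅) (hA : A ∈ B)
    (hxA : x ∈ A) (hyA : y ∈ A) (hxy : x ≠ y) (hPx : P {x}) (hPerase : P (A.erase x)) :
    IsBlockPartition P X (splitOrMerge x y B) ∧ (splitOrMerge x y B).card = B.card + 1 ∧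
      splitOrMerge x y (splitOrMerge x y B) = B := by
  have hunion : {x} ∪ A.erase x = A := by rw [← insert_eq, insert_erase hxA]
  have hC : {A} ⊆ B := singleton_subset_iff.2 hA
  have hD : IsBlockPartition P (({A} : Finset (Finset α)).biUnion id) {{x}, A.erase x} := by
    have := isBlockPartition_pair hPx hPerase (disjoint_singleton_left.2 (notMem_erase x A))
    rw [hunion] at this
    rwa [singleton_biUnion]
  have hdisj := hB.disjoint_replace hP hC hD
  have hB' := hB.replace hC hD
  have hsplit : splitOrMerge x y B = B \ {A} ∪ {{x}, A.erase x} := by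
    rw [splitOrMerge, hB.blockOf_eq hA hxA, if_pos hyA]
  rw [hsplit]
  refine ⟨hB', ?_, ?_⟩
  · have hne : ({x} : Finset α) ≠ A.erase x := fun h =>
      notMem_erase x A (h ▸ mem_singleton_self x)
    have := card_replace_add hC hdisj
    rw [card_singleton, card_pair hne] at this
    omega
  · have hx' : blockOf (B \ {A} ∪ {{x}, A.erase x}) x = {x} :=
      hB'.blockOf_eq (mem_union_right _ (mem_insert_self _ _)) (mem_singleton_self x)
    have hy' : blockOf (B \ {A} ∪ {{x}, A.erase x}) y = A.erase x :=
      hB'.blockOf_eq (mem_union_right _ (mem_insert_of_mem (mem_singleton_self _)))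
        (mem_erase.2 ⟨hxy.symm, hyA⟩)
    rw [splitOrMerge, hx', hy', if_neg (notMem_singleton.2 hxy.symm), hunion]
    exact replace_replace hC hdisj

lemma splitOrMerge_of_notMem (hB : IsBlockPartition P X B) (hP : ¬ P ∅) (hx : {x} ∈ B)
    (hA' : A' ∈ B) (hyA' : y ∈ A') (hxy : x ≠ y) (hPunion : P ({x} ∪ A')) :
    IsBlockPartition P X (splitOrMerge x y B) ∧ (splitOrMerge x y B).card + 1 = B.card ∧
      splitOrMerge x y (splitOrMerge x y B) = B := by
  have hne : ({x} : Finset α) ≠ A' := fun h => hxy (mem_singleton.1 (h ▸ hyA')).symm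
  have hxA' : x ∉ A' := fun h => hne (hB.eq_of_mem hx hA' (mem_singleton_self x) h)
  have hC : {{x}, A'} ⊆ B := insert_subset hx (singleton_subset_iff.2 hA')
  have hD : IsBlockPartition P (({{x}, A'} : Finset (Finset α)).biUnion id) {{x} ∪ A'} := by
    rw [biUnion_insert, singleton_biUnion]
    exact isBlockPartition_singleton hPunion
  have hdisj := hB.disjoint_replace hP hC hD
  have hB' := hB.replace hC hD
  have hmerge : splitOrMerge x y B = B \ {{x}, A'} ∪ {{x} ∪ A'} := by
    rw [splitOrMerge, hB.blockOf_eq hx (mem_singleton_self x), hB.blockOf_eq hA' hyA',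
      if_neg (notMem_singleton.2 hxy.symm)]
  rw [hmerge]
  refine ⟨hB', ?_, ?_⟩
  · have := card_replace_add hC hdisj
    rw [card_singleton, card_pair hne] at this
    omega
  · have hx' : blockOf (B \ {{x}, A'} ∪ {{x} ∪ A'}) x = {x} ∪ A' :=
      hB'.blockOf_eq (mem_union_right _ (mem_singleton_self _))
        (mem_union_left _ (mem_singleton_self x))
    have herase : ({x} ∪ A').erase x = A' := by rw [← insert_eq, erase_insert hxA']
    rw [splitOrMerge, hx', if_pos (mem_union_right _ hyA'), herase]
    exact replace_replace hC hdisj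

end IsBlockPartition

lemma neg_one_pow_sub_add_neg_one_pow_sub_succ {N c : ℕ} (h : c < N) :
    (-1 : ℤ) ^ (N - c) + (-1) ^ (N - (c + 1)) = 0 := by
  rw [show N - c = N - (c + 1) + 1 by omega, pow_succ]
  ring

/-- `splitOrMerge x y` is a sign-reversing involution on the block partitions of `X`. -/
theorem sum_neg_one_pow_isBlockPartition_eq_zero [Fintype α] (hP : ¬ P ∅) (hx : x ∈ X) (hy : y ∈ X)
    (hxy : x ≠ y) (hsplit : ∀ A, P A → x ∈ A → y ∈ A → P {x} ∧ P (A.erase x))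
    (hmerge : ∀ A A', P A → P A' → x ∈ A → y ∉ A → y ∈ A' → x ∉ A' → A = {x} ∧ P (A ∪ A')) :
    ∑ B : Finset (Finset α),
      (if IsBlockPartition P X B then (-1 : ℤ) ^ (X.card - B.card) else 0) = 0 := by
  have key : ∀ B, IsBlockPartition P X B → IsBlockPartition P X (splitOrMerge x y B) ∧
      ((splitOrMerge x y B).card = B.card + 1 ∨ (splitOrMerge x y B).card + 1 = B.card) ∧
      splitOrMerge x y (splitOrMerge x y B) = B := by
    intro B hB
    obtain ⟨hAB, hxA⟩ := hB.blockOf_mem_and_mem hx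
    by_cases hyA : y ∈ blockOf B x
    · obtain ⟨h1, h2⟩ := hsplit _ (hB.1 _ hAB).1 hxA hyA
      obtain ⟨hB', hcard, hinv⟩ := hB.splitOrMerge_of_mem hP hAB hxA hyA hxy h1 h2
      exact ⟨hB', .inl hcard, hinv⟩
    · obtain ⟨hA'B, hyA'⟩ := hB.blockOf_mem_and_mem hy
      have hxA' : x ∉ blockOf B y := fun h => hyA (hB.eq_of_mem hA'B hAB h hxA ▸ hyA')
      obtain ⟨hAx, hU⟩ := hmerge _ _ (hB.1 _ hAB).1 (hB.1 _ hA'B).1 hxA hyA hyA' hxA'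
      rw [hAx] at hAB hU
      obtain ⟨hB', hcard, hinv⟩ := hB.splitOrMerge_of_notMem hP hAB hA'B hyA' hxy hU
      exact ⟨hB', .inr hcard, hinv⟩
  rw [← sum_filter]
  refine sum_involution (fun B _ => splitOrMerge x y B) (fun B hB => ?_) (fun B hB _ => ?_)
    (fun B hB => mem_filter.2 ⟨mem_univ _, (key B (mem_filter.1 hB).2).1⟩)
    (fun B hB => (key B (mem_filter.1 hB).2).2.2)
  · have hB := (mem_filter.1 hB).2
    obtain ⟨hB', hcard, -⟩ := key B hB
    have := hB.card_le hP
    have := hB'.card_le hP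
    rcases hcard with hcard | hcard
    · rw [hcard]
      exact neg_one_pow_sub_add_neg_one_pow_sub_succ (by omega)
    · rw [← hcard, add_comm]
      exact neg_one_pow_sub_add_neg_one_pow_sub_succ (by omega)
  · obtain ⟨-, hcard, -⟩ := key B (mem_filter.1 hB).2
    intro h
    rw [h] at hcard
    omega

end SplitOrMerge

section CadetSequences

open Finset

variable {n m : ℕ} {S : Fin n → Fin n → Finset ℤ} {T : PlaneTree n m}

lemma PlaneTree.IsCadet.right_unique {u x y : Fin n} (hx : T.IsCadet u x) (hy : T.IsCadet u y) :
    x = y :=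
  T.pos_inj x y hx.1.1 hy.1.1 (hx.1.2.trans hy.1.2.symm) (le_antisymm (hy.2 x hx.1) (hx.2 y hy.1))

lemma PlaneTree.IsCadet.left_unique {u u' x : Fin n} (hx : T.IsCadet u x) (hy : T.IsCadet u' x) :
    u = u' :=
  hx.1.2.symm.trans hy.1.2

namespace IsMaxCadetSeq

variable {k l q r : ℕ} {v w : ℕ → Fin n}

lemma shift_forward (hmax : IsMaxCadetSeq T k v) (hw : IsCadetWindow T w 1 l) (hr : 1 ≤ r)
    (hq : 1 ≤ q) (hqk : q ≤ k) (heq : w r = v q) :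
    ∀ j, r + j ≤ l → q + j ≤ k ∧ w (r + j) = v (q + j)
  | 0, _ => ⟨hqk, heq⟩
  | j + 1, hj => by
    obtain ⟨hjk, hwj⟩ := shift_forward hmax hw hr hq hqk heq j (by omega)
    have hcad : T.IsCadet (v (q + j)) (w (r + j + 1)) := by
      simpa [hwj] using hw.2.2 (r + j + 1) (by omega) (by omega)
    have hlt : q + j < k := lt_of_le_of_ne hjk fun h => hmax.2.1 _ (h ▸ hcad.1)
    have hcad' : T.IsCadet (v (q + j)) (v (q + j + 1)) := by
      simpa using hmax.1.2.2 (q + j + 1) (by omega) (by omega)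
    exact ⟨hlt, hcad.right_unique hcad'⟩

lemma shift_backward (hmax : IsMaxCadetSeq T k v) (hw : IsCadetWindow T w 1 l) (hrl : r ≤ l)
    (hq : 1 ≤ q) (hqk : q ≤ k) (heq : w r = v q) :
    ∀ j, j < r → j < q ∧ w (r - j) = v (q - j)
  | 0, _ => ⟨hq, heq⟩
  | j + 1, hj => by
    obtain ⟨hjq, hwj⟩ := shift_backward hmax hw hrl hq hqk heq j (by omega)
    have hcad : T.IsCadet (w (r - (j + 1))) (v (q - j)) := by
      have := hw.2.2 (r - j) (by omega) (by omega)
      rwa [hwj, show r - j - 1 = r - (j + 1) by omega] at this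
    have hq1 : q - j ≠ 1 := fun h => hmax.2.2 _ (h ▸ hcad)
    have hcad' : T.IsCadet (v (q - (j + 1))) (v (q - j)) := by
      have := hmax.1.2.2 (q - j) (by omega) (by omega)
      rwa [show q - j - 1 = q - (j + 1) by omega] at this
    exact ⟨by omega, hcad.left_unique hcad'⟩

lemma eq_shift (hmax : IsMaxCadetSeq T k v) (hw : IsCadetWindow T w 1 l) (hr : 1 ≤ r)
    (hrl : r ≤ l) (hq : 1 ≤ q) (hqk : q ≤ k) (heq : w r = v q) :
    r ≤ q ∧ l + (q - r) ≤ k ∧ ∀ p, 1 ≤ p → p ≤ l → w p = v (p + (q - r)) := by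
  have hrq := (hmax.shift_backward hw hrl hq hqk heq (r - 1) (by omega)).1
  have hlk := (hmax.shift_forward hw hr hq hqk heq (l - r) (by omega)).1
  refine ⟨by omega, by omega, fun p hp hpl => ?_⟩
  rcases le_or_gt p r with hpr | hpr
  · have := (hmax.shift_backward hw hrl hq hqk heq (r - p) (by omega)).2
    rwa [show r - (r - p) = p by omega, show q - (r - p) = p + (q - r) by omega] at this
  · have := (hmax.shift_forward hw hr hq hqk heq (p - r) (by omega)).2
    rwa [show r + (p - r) = p by omega, show q + (p - r) = p + (q - r) by omega] at this

end IsMaxCadetSeq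

variable {v : ℕ → Fin n} {a b c d k : ℕ}

lemma WindowInj.mono (hinj : WindowInj v a b) (hac : a ≤ c) (hdb : d ≤ b) : WindowInj v c d :=
  fun p q hp hpd hq hqd => hinj p q (by omega) (by omega) (by omega) (by omega)

lemma WindowInj.mem_Icc_of_mem_image (hinj : WindowInj v a b) {p : ℕ} (hap : a ≤ p)
    (hpb : p ≤ b) (hac : a ≤ c) (hdb : d ≤ b) (h : v p ∈ (Icc c d).image v) : c ≤ p ∧ p ≤ d := by
  obtain ⟨p', hp', hp'p⟩ := mem_image.1 h
  rw [mem_Icc] at hp'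
  have := hinj p' p (by omega) (by omega) hap hpb hp'p
  omega

lemma IsSCadetWindow.congr {v' : ℕ → Fin n} (hw : IsSCadetWindow S T v a b)
    (h : ∀ p, a ≤ p → p ≤ b → v p = v' p) : IsSCadetWindow S T v' a b := by
  obtain ⟨⟨ha, hab, hcad⟩, hS⟩ := hw
  refine ⟨⟨ha, hab, fun p hp hpb => ?_⟩, fun i j hi hij hj => ?_⟩
  · rw [← h (p - 1) (by omega) (by omega), ← h p (by omega) hpb]
    exact hcad p hp hpb
  · have hsum : ∑ p ∈ Icc (i + 1) j, T.lsib (v' p) = ∑ p ∈ Icc (i + 1) j, T.lsib (v p) :=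
      sum_congr rfl fun p hp => by rw [mem_Icc] at hp; rw [h p (by omega) (by omega)]
    rw [hsum, ← h i hi (by omega), ← h j (by omega) hj]
    exact hS i j hi hij hj

lemma IsSCadetWindow.mono (hw : IsSCadetWindow S T v a b) (hac : a ≤ c) (hcd : c ≤ d)
    (hdb : d ≤ b) : IsSCadetWindow S T v c d := by
  obtain ⟨⟨ha, -, hcad⟩, hS⟩ := hw
  exact ⟨⟨by omega, hcd, fun p hp hpd => hcad p (by omega) (by omega)⟩,
    fun i j hi hij hj => hS i j (by omega) hij (by omega)⟩

lemma isSCadetWindow_comp_add_iff {t : ℕ} (hc : 1 ≤ c) :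
    IsSCadetWindow S T (fun p => v (p + t)) c d ↔ IsSCadetWindow S T v (c + t) (d + t) := by
  have hsum : ∀ i j, ∑ p ∈ Icc (i + 1) j, T.lsib (v (p + t)) =
      ∑ p ∈ Icc (i + t + 1) (j + t), T.lsib (v p) := by
    intro i j
    rw [show i + t + 1 = i + 1 + t by omega, ← map_add_right_Icc, sum_map]
    rfl
  constructor
  · rintro ⟨⟨-, hcd, hcad⟩, hS⟩
    refine ⟨⟨by omega, by omega, fun p hp hpd => ?_⟩, fun i j hi hij hj => ?_⟩
    · have := hcad (p - t) (by omega) (by omega)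
      beta_reduce at this
      rwa [show p - t - 1 + t = p - 1 by omega, show p - t + t = p by omega] at this
    · have := hS (i - t) (j - t) (by omega) (by omega) (by omega)
      beta_reduce at this
      rwa [hsum, show i - t + t = i by omega, show j - t + t = j by omega] at this
  · rintro ⟨⟨-, hcd, hcad⟩, hS⟩
    refine ⟨⟨hc, by omega, fun p hp hpd => ?_⟩, fun i j hi hij hj => ?_⟩
    · have := hcad (p + t) (by omega) (by omega)
      rwa [show p + t - 1 = p - 1 + t by omega] at this
    · rw [hsum]
      exact hS (i + t) (j + t) (by omega) (by omega) (by omega)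

lemma IsSCadetWindow.isSBox_image (hw : IsSCadetWindow S T v c d) (hinj : WindowInj v c d) :
    IsSBox S T ((Icc c d).image v) := by
  have hc : 1 ≤ c := hw.1.1
  have hcd : c ≤ d := hw.1.2.1
  refine ⟨d - c + 1, fun p => v (p + (c - 1)), ?_, ?_, ?_⟩
  · rw [isSCadetWindow_comp_add_iff le_rfl, show 1 + (c - 1) = c by omega,
      show d - c + 1 + (c - 1) = d by omega]
    exact hw
  · intro p q hp hpd hq hqd hpq
    have := hinj _ _ (by omega) (by omega) (by omega) (by omega) hpq
    omega
  · rw [show (fun p => v (p + (c - 1))) = v ∘ (· + (c - 1)) from rfl, ← image_image,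
      image_add_right_Icc, show 1 + (c - 1) = c by omega,
      show d - c + 1 + (c - 1) = d by omega]

lemma not_isSBox_empty : ¬ IsSBox S T ∅ := by
  rintro ⟨l, w, hw, -, h⟩
  exact (image_nonempty.2 (nonempty_Icc.2 hw.1.2.1)).ne_empty h.symm

lemma IsMaxCadetSeq.exists_window_of_isSBox {q : ℕ} (hmax : IsMaxCadetSeq T k v)
    {Z : Finset (Fin n)} (hZ : IsSBox S T Z) (hq : 1 ≤ q) (hqk : q ≤ k) (hmem : v q ∈ Z) :
    ∃ c d, c ≤ q ∧ q ≤ d ∧ d ≤ k ∧ IsSCadetWindow S T v c d ∧ Z = (Icc c d).image v := by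
  obtain ⟨l, w, hw, -, rfl⟩ := hZ
  obtain ⟨r, hr, hrq⟩ := mem_image.1 hmem
  rw [mem_Icc] at hr
  obtain ⟨hrq', hlk, hshift⟩ := hmax.eq_shift hw.1 hr.1 hr.2 hq hqk hrq
  refine ⟨1 + (q - r), l + (q - r), by omega, by omega, hlk, ?_, ?_⟩
  · exact (isSCadetWindow_comp_add_iff le_rfl).1
      (hw.congr fun p hp hpl => hshift p hp hpl)
  · rw [← image_add_right_Icc, image_image]
    exact image_congr fun p hp => hshift p (mem_Icc.1 hp).1 (mem_Icc.1 hp).2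

lemma IsSCadetWindow.exists_isMaxSCadetWindow (hw : IsSCadetWindow S T v c d) (hdk : d ≤ k) :
    ∃ c' d', c' ≤ c ∧ d ≤ d' ∧ IsMaxSCadetWindow S T k v c' d' := by
  have hex : ∃ c', IsSCadetWindow S T v c' d := ⟨c, hw⟩
  have hc' : IsSCadetWindow S T v (Nat.find hex) d := Nat.find_spec hex
  set c' := Nat.find hex
  set d' := Nat.findGreatest (fun d' => IsSCadetWindow S T v c' d') k
  have hd' : IsSCadetWindow S T v c' d' := Nat.findGreatest_spec hdk hc'
  refine ⟨c', d', Nat.find_min' hex hw, Nat.le_findGreatest hdk hc', Nat.findGreatest_le k, hd',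
    ?_, ?_⟩
  · refine or_iff_not_imp_left.2 fun hc1 hleft => ?_
    have hc'1 := hc'.1.1
    exact Nat.find_min hex (show c' - 1 < c' by omega)
      (hleft.mono le_rfl (by have := hc'.1.2.1; omega) (Nat.le_findGreatest hdk hc'))
  · refine or_iff_not_imp_left.2 fun hdk' => ?_
    exact Nat.findGreatest_is_greatest (Nat.lt_succ_self d')
      (lt_of_le_of_ne (Nat.findGreatest_le k) hdk')

end CadetSequences

def MeetsNoOtherMaxSCadetSet {n m : ℕ} (S : Fin n → Fin n → Finset ℤ) (T : PlaneTree n m)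
    (Y : Finset (Fin n)) : Prop :=
  ∀ Y', IsMaxSCadetSet S T Y' → (Y ∩ Y').Nonempty → Y' = Y

section Isolated

open Finset

variable {n m : ℕ} {S : Fin n → Fin n → Finset ℤ} {T : PlaneTree n m} {v : ℕ → Fin n}
  {a b k : ℕ}

lemma image_Icc_eq_insert {d : ℕ} (h : a ≤ d) :
    (Icc a d).image v = insert (v a) ((Icc (a + 1) d).image v) := by
  rw [← image_insert, ← Order.succ_eq_add_one, insert_Icc_succ_left_eq_Icc h]

lemma IsMaxSCadetWindow.isSBox_image_Icc (hY : IsMaxSCadetWindow S T k v a b)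
    (hinj : WindowInj v 1 k) {c d : ℕ} (hac : a ≤ c) (hcd : c ≤ d) (hdb : d ≤ b) :
    IsSBox S T ((Icc c d).image v) :=
  (hY.2.1.mono hac hcd hdb).isSBox_image (hinj.mono (hY.2.1.1.1.trans hac) (hdb.trans hY.1))

/-- The maximal `S`-cadet window around `[c, d]` meets `[a, b]`, hence is `[a, b]`. -/
lemma IsSCadetWindow.le_and_le_of_meetsNoOther (hmax : IsMaxCadetSeq T k v)
    (hinj : WindowInj v 1 k) (hY : IsMaxSCadetWindow S T k v a b)
    (hiso : MeetsNoOtherMaxSCadetSet S T ((Icc a b).image v)) {c d q : ℕ}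
    (hw : IsSCadetWindow S T v c d) (hdk : d ≤ k) (hcq : c ≤ q) (hqd : q ≤ d) (haq : a ≤ q)
    (hqb : q ≤ b) : a ≤ c ∧ d ≤ b := by
  have ha : 1 ≤ a := hY.2.1.1.1
  obtain ⟨c', d', hc', hd', hmax'⟩ := hw.exists_isMaxSCadetWindow hdk
  have hc'1 : 1 ≤ c' := hmax'.2.1.1.1
  have hc'd' : c' ≤ d' := hmax'.2.1.1.2.1
  have hd'k : d' ≤ k := hmax'.1
  have hYY' := hiso _ ⟨k, v, c', d', hmax, hinj, hmax', rfl⟩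
    ⟨v q, mem_inter.2 ⟨mem_image_of_mem v (mem_Icc.2 ⟨haq, hqb⟩),
      mem_image_of_mem v (mem_Icc.2 ⟨by omega, by omega⟩)⟩⟩
  have hc'Y := hinj.mem_Icc_of_mem_image hc'1 (by omega) ha hY.1
    (hYY' ▸ mem_image_of_mem v (mem_Icc.2 ⟨le_rfl, hc'd'⟩))
  have hd'Y := hinj.mem_Icc_of_mem_image (p := d') (by omega) hd'k ha hY.1
    (hYY' ▸ mem_image_of_mem v (mem_Icc.2 ⟨hc'd', le_rfl⟩))
  omega

lemma IsMaxCadetSeq.eq_image_Icc_of_meetsNoOther (hmax : IsMaxCadetSeq T k v)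
    (hinj : WindowInj v 1 k) (hY : IsMaxSCadetWindow S T k v a b)
    (hiso : MeetsNoOtherMaxSCadetSet S T ((Icc a b).image v)) {Z : Finset (Fin n)}
    (hZ : IsSBox S T Z) {q : ℕ} (haq : a ≤ q) (hqb : q ≤ b) (hmem : v q ∈ Z) :
    ∃ c d, a ≤ c ∧ c ≤ q ∧ q ≤ d ∧ d ≤ b ∧ Z = (Icc c d).image v := by
  obtain ⟨c, d, hcq, hqd, hdk, hw, rfl⟩ :=
    hmax.exists_window_of_isSBox hZ (hY.2.1.1.1.trans haq) (hqb.trans hY.1) hmem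
  obtain ⟨hac, hdb⟩ := hw.le_and_le_of_meetsNoOther hmax hinj hY hiso hdk hcq hqd haq hqb
  exact ⟨c, d, hac, hcq, hqd, hdb, rfl⟩

lemma isSBox_split_of_meetsNoOther (hmax : IsMaxCadetSeq T k v) (hinj : WindowInj v 1 k)
    (hY : IsMaxSCadetWindow S T k v a b) (hab : a < b)
    (hiso : MeetsNoOtherMaxSCadetSet S T ((Icc a b).image v)) (A : Finset (Fin n))
    (hA : IsSBox S T A) (hxA : v a ∈ A) (hyA : v (a + 1) ∈ A) :
    IsSBox S T {v a} ∧ IsSBox S T (A.erase (v a)) := by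
  have ha : 1 ≤ a := hY.2.1.1.1
  obtain ⟨c, d, hac, hca, had, hdb, rfl⟩ :=
    hmax.eq_image_Icc_of_meetsNoOther hinj hY hiso hA le_rfl hab.le hxA
  obtain rfl : a = c := le_antisymm hac hca
  have hbk : b ≤ k := hY.1
  have had' := (hinj.mem_Icc_of_mem_image (p := a + 1) (by omega) (by omega) ha (by omega)
    hyA).2
  have hxA' : v a ∉ (Icc (a + 1) d).image v := fun h => by
    have := (hinj.mem_Icc_of_mem_image (p := a) ha (by omega) (by omega) (by omega) h).1
    omega
  refine ⟨?_, ?_⟩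
  · simpa using hY.isSBox_image_Icc hinj le_rfl le_rfl hab.le
  · rw [image_Icc_eq_insert had, erase_insert hxA']
    exact hY.isSBox_image_Icc hinj (by omega) had' hdb

lemma isSBox_merge_of_meetsNoOther (hmax : IsMaxCadetSeq T k v) (hinj : WindowInj v 1 k)
    (hY : IsMaxSCadetWindow S T k v a b) (hab : a < b)
    (hiso : MeetsNoOtherMaxSCadetSet S T ((Icc a b).image v)) (A A' : Finset (Fin n))
    (hA : IsSBox S T A) (hA' : IsSBox S T A') (hxA : v a ∈ A) (hyA : v (a + 1) ∉ A)
    (hyA' : v (a + 1) ∈ A') (hxA' : v a ∉ A') : A = {v a} ∧ IsSBox S T (A ∪ A') := by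
  obtain ⟨c, d, hac, hca, had, hdb, rfl⟩ :=
    hmax.eq_image_Icc_of_meetsNoOther hinj hY hiso hA le_rfl hab.le hxA
  obtain ⟨c', d', hac', hc'a, had', hd'b, rfl⟩ :=
    hmax.eq_image_Icc_of_meetsNoOther hinj hY hiso hA' (by omega) hab hyA'
  obtain rfl : a = c := le_antisymm hac hca
  obtain rfl : a = d := by
    by_contra hd
    exact hyA (mem_image_of_mem v (mem_Icc.2 ⟨by omega, by omega⟩))
  obtain rfl : a + 1 = c' := by
    by_contra hc'
    exact hxA' (mem_image_of_mem v (mem_Icc.2 ⟨by omega, by omega⟩))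
  refine ⟨by simp, ?_⟩
  rw [Icc_self, image_singleton, ← insert_eq, ← image_Icc_eq_insert (by omega)]
  exact hY.isSBox_image_Icc hinj le_rfl (by omega) hd'b

theorem treeContrib_eq_zero_of_meetsNoOther (hmax : IsMaxCadetSeq T k v)
    (hinj : WindowInj v 1 k) (hY : IsMaxSCadetWindow S T k v a b) (hab : a < b)
    (hiso : MeetsNoOtherMaxSCadetSet S T ((Icc a b).image v)) : treeContrib S T = 0 := by
  have hbk : b ≤ k := hY.1
  have hxy : v a ≠ v (a + 1) := fun h => by
    have := hinj _ _ hY.2.1.1.1 (by omega) (by omega) (by omega) h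
    omega
  exact sum_neg_one_pow_isBlockPartition_eq_zero not_isSBox_empty (mem_univ _) (mem_univ _) hxy
    (isSBox_split_of_meetsNoOther hmax hinj hY hab hiso)
    (isSBox_merge_of_meetsNoOther hmax hinj hY hab hiso)

end Isolated

/-- Corollary 3.15: in a tree with nonzero contribution, any maximal
`S`-cadet sequence of size greater than one intersects some other maximal `S`-cadet
sequence. -/
theorem statement_4 {n : ℕ} (S : Fin n → Fin n → Finset ℤ) (T : PlaneTree n (mOf S))
    (hT : treeContrib S T ≠ 0) (Y : Finset (Fin n)) (hY : IsMaxSCadetSet S T Y)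
    (hcard : 1 < Y.card) :
    ∃ Y', IsMaxSCadetSet S T Y' ∧ Y' ≠ Y ∧ (Y ∩ Y').Nonempty := by
  by_contra! hiso
  obtain ⟨k, v, a, b, hmax, hinj, hY, rfl⟩ := hY
  have hab : a < b := by
    have := hcard.trans_le Finset.card_image_le
    rw [Nat.card_Icc] at this
    omega
  refine hT (treeContrib_eq_zero_of_meetsNoOther hmax hinj hY hab fun Y' hY' hmeet => ?_)
  by_contra hne
  exact hmeet.ne_empty (hiso Y' hY' hne)
end

section
/- Let A_S be almost transitive and let T ∈ T^(m)(n). Suppose that (v_1, v_2, …, v_k) and (v_k, v_{k+1}, …, v_{k+ℓ}) are S-cadet sequences of T. If either v_k = 1 or neither sequence contains the node 1, then (v_1, v_2, …, v_{k+ℓ}) is an S-cadet sequence of T. -/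
open scoped Classical

/-!
The sums of left-sibling numbers along a cadet sequence are additive: the sum from `v i` to
`v j` through `v k` is the sum from `v i` to `v k` plus the sum from `v k` to `v j`. So the only
new pairs `(v i, v j)` with `i < k < j` are handled by almost transitivity at `(v i, v k, v j)`.
The three nodes are distinct because a cadet sequence is a path down the tree, and the
hypothesis on the node `1` guarantees that neither `v i` nor `v j` is `1`.
-/

open Finset

namespace IsCadetWindow

variable {n m : ℕ} {T : PlaneTree n m} {v : ℕ → Fin n} {a b c : ℕ}

theorem append (h₁ : IsCadetWindow T v a b) (h₂ : IsCadetWindow T v b c) :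
    IsCadetWindow T v a c := by
  refine ⟨h₁.1, h₁.2.1.trans h₂.2.1, fun p hap hpc => ?_⟩
  rcases le_or_gt p b with hpb | hbp
  · exact h₁.2.2 p hap hpb
  · exact h₂.2.2 p hbp hpc

theorem parent_eq (h : IsCadetWindow T v a b) {p : ℕ} (hap : a < p) (hpb : p ≤ b) :
    T.parent (v p) = v (p - 1) :=
  (h.2.2 p hap hpb).1.2

theorem ne_root (h : IsCadetWindow T v a b) {p : ℕ} (hap : a < p) (hpb : p ≤ b) :
    v p ≠ T.root :=
  (h.2.2 p hap hpb).1.1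

theorem parent_iterate (h : IsCadetWindow T v a b) {j : ℕ} (hjb : j ≤ b) :
    ∀ s, s ≤ j - a → T.parent^[s] (v j) = v (j - s)
  | 0, _ => rfl
  | s + 1, hs => by
    rw [Function.iterate_succ_apply', h.parent_iterate hjb s (by omega),
      h.parent_eq (by omega) (by omega)]
    rfl

/-- A cadet sequence does not repeat a node: a repetition would make the parent map cycle
through nodes of the sequence below its first node, so it would never reach the root. -/
theorem injOn (h : IsCadetWindow T v a b) : Set.InjOn v (Set.Icc a b) := by
  suffices ∀ i j, a ≤ i → i < j → j ≤ b → v i ≠ v j by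
    intro i ⟨hai, hib⟩ j ⟨haj, hjb⟩ hij
    by_contra hne
    rcases lt_or_gt_of_ne hne with hlt | hlt
    · exact this i j hai hlt hjb hij
    · exact this j i haj hlt hib hij.symm
  intro i j hai hij hjb hvij
  have hperiodic : Function.IsPeriodicPt T.parent (j - i) (v j) := by
    rw [Function.IsPeriodicPt, Function.IsFixedPt, h.parent_iterate hjb (j - i) (by omega),
      Nat.sub_sub_self hij.le, hvij]
  obtain ⟨N, hN⟩ := T.reaches_root (v j)
  have hmod : N % (j - i) < j - i := Nat.mod_lt _ (by omega)
  rw [← hperiodic.iterate_mod_apply, h.parent_iterate hjb _ (by omega)] at hN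
  exact h.ne_root (by omega) (by omega) hN

end IsCadetWindow

theorem IsSCadetWindow.append {n m : ℕ} {S : Fin n → Fin n → Finset ℤ} {T : PlaneTree n m}
    {v : ℕ → Fin n} {a b c : ℕ} (hAT : AlmostTransitive S)
    (h₁ : IsSCadetWindow S T v a b) (h₂ : IsSCadetWindow S T v b c)
    (hne : ∀ i j, a ≤ i → i < b → b < j → j ≤ c → (v i : ℕ) ≠ 0 ∧ (v j : ℕ) ≠ 0) :
    IsSCadetWindow S T v a c := by
  have hcw := h₁.1.append h₂.1
  refine ⟨hcw, fun i j hai hij hjc => ?_⟩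
  rcases le_or_gt j b with hjb | hbj
  · exact h₁.2 i j hai hij hjb
  rcases le_or_gt b i with hbi | hib
  · exact h₂.2 i j hbi hij hjc
  have hsplit : ∑ p ∈ Icc (i + 1) j, T.lsib (v p) =
      ∑ p ∈ Icc (i + 1) b, T.lsib (v p) + ∑ p ∈ Icc (b + 1) j, T.lsib (v p) := by
    simp only [Icc_add_one_left_eq_Ioc]
    exact (sum_Ioc_consecutive _ hib.le hbj.le).symm
  have hb : a ≤ b := h₁.1.2.1
  have hinj : ∀ p q, a ≤ p → p ≤ c → a ≤ q → q ≤ c → p ≠ q → v p ≠ v q :=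
    fun p q hap hpc haq hqc => mt (hcw.injOn ⟨hap, hpc⟩ ⟨haq, hqc⟩)
  rw [hsplit]
  exact hAT (v i) (v b) (v j) (hinj i b hai (by omega) hb (by omega) hib.ne)
    (hinj b j hb (by omega) (by omega) hjc hbj.ne) (hinj i j hai (by omega) (by omega) hjc hij.ne)
    (hne i j hai hib hbj hjc).1 (hne i j hai hib hbj hjc).2 _ _
    (h₁.2 i b hai hib le_rfl) (h₂.2 b j le_rfl hbj hjc)

/-- Lemma 4.4: if `A_S` is almost transitive and `(v 1, …, v k)` and
`(v k, …, v (k+l))` are `S`-cadet sequences of `T` such that either `v k` is the node `1`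
or neither sequence contains the node `1`, then `(v 1, …, v (k+l))` is an
`S`-cadet sequence of `T`. -/
theorem statement_7 {n : ℕ} [NeZero n] (S : Fin n → Fin n → Finset ℤ)
    (hAT : AlmostTransitive S) (T : PlaneTree n (mOf S)) (v : ℕ → Fin n) (k l : ℕ)
    (h1 : IsSCadetWindow S T v 1 k) (h2 : IsSCadetWindow S T v k (k + l))
    (h3 : v k = 0 ∨ ∀ p, 1 ≤ p → p ≤ k + l → v p ≠ 0) :
    IsSCadetWindow S T v 1 (k + l) := by
  refine h1.append hAT h2 fun i j hi hik hkj hj => ?_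
  simp only [ne_eq, Fin.val_eq_zero_iff]
  rcases h3 with hk | hnot
  · have hinj := (h1.1.append h2.1).injOn
    have hk1 : 1 ≤ k := h1.1.1.trans h1.1.2.1
    rw [← hk]
    exact ⟨fun h => hik.ne (hinj ⟨hi, by omega⟩ ⟨hk1, by omega⟩ h),
      fun h => hkj.ne' (hinj ⟨by omega, hj⟩ ⟨hk1, by omega⟩ h)⟩
  · exact ⟨hnot i hi (by omega), hnot j (by omega) hj⟩
end

section
/- Let A_S be almost transitive and let T ∈ T^(m)(n). Suppose there exist positive integers a, b, c and nodes u_1, …, u_{a+b+c} of T such that both (u_1, u_2, …, u_{a+b}) and (u_a, u_{a+1}, …, u_{a+b+c}) are maximal S-cadet sequences of T. Then either a ≥ 2 and u_{a−1} = 1, or u_{a+b+1} = 1. -/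
open scoped Classical

/-! Maximality of the `S`-cadet window `[1, a+b]` against `u (a+b+1)` yields an index `x`
whose pair with `a+b+1` fails the `S`-condition, and `x < a` because `[a, a+b+c]` is an
`S`-cadet window; symmetrically, maximality of `[a, a+b+c]` yields `y > a+b` whose pair with
`a-1` fails. If neither `u (a-1)` nor `u (a+b+1)` were the node `1`, almost transitivity
through `u (a+b)` would make the pair `(a-1, a+b+1)` good, and one more application of almost
transitivity (through `u (a-1)` or through `u (a+b+1)`, according to whether `u x` is the
node `1`) would make the pair `(x, a+b+1)` or `(a-1, y)` good, a contradiction. -/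

variable {n m : ℕ}

namespace PlaneTree

variable {T : PlaneTree n m}

noncomputable def depth (T : PlaneTree n m) (v : Fin n) : ℕ := Nat.find (T.reaches_root v)

lemma depth_eq_succ_of_isChild {u v : Fin n} (h : T.IsChild v u) :
    T.depth v = T.depth u + 1 := by
  have hu : T.parent^[T.depth u + 1] v = T.root := by
    rw [Function.iterate_succ_apply, h.2]
    exact Nat.find_spec (T.reaches_root u)
  have hv : T.parent^[T.depth v] v = T.root := Nat.find_spec (T.reaches_root v)
  obtain ⟨k, hk⟩ : ∃ k, T.depth v = k + 1 :=
    Nat.exists_eq_succ_of_ne_zero fun h0 => h.1 (by rwa [h0, Function.iterate_zero_apply] at hv)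
  rw [hk, Function.iterate_succ_apply, h.2] at hv
  have : T.depth u ≤ k := Nat.find_le hv
  have : T.depth v ≤ T.depth u + 1 := Nat.find_le hu
  omega

lemma IsCadet.unique {u v w : Fin n} (hv : T.IsCadet u v) (hw : T.IsCadet u w) : v = w :=
  T.pos_inj v w hv.1.1 hw.1.1 (hv.1.2.trans hw.1.2.symm) (le_antisymm (hw.2 v hv.1) (hv.2 w hw.1))

end PlaneTree

section CadetWindow

variable {T : PlaneTree n m} {u v : ℕ → Fin n} {A B A' B' : ℕ}

lemma IsCadetWindow.mono (h : IsCadetWindow T v A B) {A₁ B₁ : ℕ} (hA : A ≤ A₁)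
    (hAB : A₁ ≤ B₁) (hB : B₁ ≤ B) : IsCadetWindow T v A₁ B₁ :=
  ⟨h.1.trans hA, hAB, fun p hp hpB => h.2.2 p (by omega) (by omega)⟩

lemma IsCadetWindow.depth_eq (h : IsCadetWindow T v A B) {p : ℕ} (hAp : A ≤ p) (hpB : p ≤ B) :
    T.depth (v p) = T.depth (v A) + (p - A) := by
  induction p, hAp using Nat.le_induction with
  | base => simp
  | succ p hAp ih =>
    have hc := h.2.2 (p + 1) (by omega) hpB
    rw [Nat.add_sub_cancel] at hc
    rw [PlaneTree.depth_eq_succ_of_isChild hc.1, ih (by omega)]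
    omega

lemma IsCadetWindow.eq_of_head_eq (hu : IsCadetWindow T u A B) (hv : IsCadetWindow T v A' B')
    (h : u A = v A') {q : ℕ} (hq : A + q ≤ B) (hq' : A' + q ≤ B') :
    u (A + q) = v (A' + q) := by
  induction q with
  | zero => exact h
  | succ q ih =>
    have hcu := hu.2.2 (A + q + 1) (by omega) hq
    have hcv := hv.2.2 (A' + q + 1) (by omega) hq'
    rw [Nat.add_sub_cancel, ih (by omega) (by omega)] at hcu
    rw [Nat.add_sub_cancel] at hcv
    exact hcu.unique hcv

lemma IsCadetWindow.exists_of_mem_image (h : IsCadetWindow T v A B) {w : Fin n}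
    (hw : w ∈ (Finset.Icc A B).image v) :
    ∃ p, A ≤ p ∧ p ≤ B ∧ w = v p ∧ T.depth w = T.depth (v A) + (p - A) := by
  obtain ⟨p, hp, rfl⟩ := Finset.mem_image.mp hw
  obtain ⟨hAp, hpB⟩ := Finset.mem_Icc.mp hp
  exact ⟨p, hAp, hpB, rfl, h.depth_eq hAp hpB⟩

/-- The depths along a cadet window are consecutive, so its node set determines its first
node (the one of least depth) and its length. -/
lemma IsCadetWindow.head_eq_and_length_eq (hu : IsCadetWindow T u A B)
    (hv : IsCadetWindow T v A' B') (him : (Finset.Icc A B).image u = (Finset.Icc A' B').image v) :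
    u A = v A' ∧ B - A = B' - A' := by
  have mem_u : ∀ {p}, A ≤ p → p ≤ B → u p ∈ (Finset.Icc A' B').image v := fun hAp hpB =>
    him ▸ Finset.mem_image_of_mem u (Finset.mem_Icc.mpr ⟨hAp, hpB⟩)
  have mem_v : ∀ {p}, A' ≤ p → p ≤ B' → v p ∈ (Finset.Icc A B).image u := fun hAp hpB =>
    him.symm ▸ Finset.mem_image_of_mem v (Finset.mem_Icc.mpr ⟨hAp, hpB⟩)
  obtain ⟨p, hA'p, -, hup, hdp⟩ := hv.exists_of_mem_image (mem_u le_rfl hu.2.1)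
  obtain ⟨r, -, -, -, hdr⟩ := hu.exists_of_mem_image (mem_v le_rfl hv.2.1)
  obtain ⟨p', -, hp'B', -, hdu⟩ := hv.exists_of_mem_image (mem_u hu.2.1 le_rfl)
  obtain ⟨r', -, hr'B, -, hdv⟩ := hu.exists_of_mem_image (mem_v hv.2.1 le_rfl)
  have hdB := hu.depth_eq hu.2.1 le_rfl
  have hdB' := hv.depth_eq hv.2.1 le_rfl
  refine ⟨?_, by omega⟩
  rw [hup, show p = A' by omega]

end CadetWindow

section SPair

variable {S : Fin n → Fin n → Finset ℤ} {T : PlaneTree n m} {u v : ℕ → Fin n}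
  {A B A' B' : ℕ}

def IsSPair (S : Fin n → Fin n → Finset ℤ) (T : PlaneTree n m) (v : ℕ → Fin n) (i j : ℕ) :
    Prop :=
  (∑ p ∈ Finset.Icc (i + 1) j, T.lsib (v p)) ∉ Sminus S (v i) (v j)

lemma IsSCadetWindow.isSPair (h : IsSCadetWindow S T v A B) {i j : ℕ} (hi : A ≤ i)
    (hij : i < j) (hj : j ≤ B) : IsSPair S T v i j :=
  h.2 i j hi hij hj

lemma isSPair_shift_iff {L i j : ℕ} (heq : ∀ q ≤ L, u (A + q) = v (A' + q)) (hij : i ≤ j)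
    (hj : j ≤ L) : IsSPair S T u (A + i) (A + j) ↔ IsSPair S T v (A' + i) (A' + j) := by
  have hsum : ∀ (w : ℕ → Fin n) (C : ℕ), ∑ p ∈ Finset.Icc (C + i + 1) (C + j), T.lsib (w p)
      = ∑ q ∈ Finset.Icc (i + 1) j, T.lsib (w (C + q)) := fun w C => by
    rw [add_assoc, ← Finset.map_add_left_Icc, Finset.sum_map]
    rfl
  have hsum_eq : ∑ q ∈ Finset.Icc (i + 1) j, T.lsib (u (A + q))
      = ∑ q ∈ Finset.Icc (i + 1) j, T.lsib (v (A' + q)) :=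
    Finset.sum_congr rfl fun q hq => by rw [heq q ((Finset.mem_Icc.mp hq).2.trans hj)]
  unfold IsSPair
  rw [hsum, hsum, hsum_eq, heq i (hij.trans hj), heq j hj]

lemma IsSCadetWindow.of_head_eq (hu : IsCadetWindow T u A B) (hv : IsSCadetWindow S T v A' B')
    (hlen : B - A ≤ B' - A') (hhead : u A = v A') : IsSCadetWindow S T u A B := by
  refine ⟨hu, fun i j hi hij hj => ?_⟩
  have := hu.2.1
  have := hv.1.2.1
  have heq : ∀ q ≤ B - A, u (A + q) = v (A' + q) := fun q hq =>
    hu.eq_of_head_eq hv.1 hhead (by omega) (by omega)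
  obtain ⟨i, rfl⟩ := Nat.exists_eq_add_of_le hi
  obtain ⟨j, rfl⟩ := Nat.exists_eq_add_of_le (hi.trans hij.le)
  exact (isSPair_shift_iff heq (by omega) (by omega)).2
    (hv.isSPair (by omega) (by omega) (by omega))

lemma IsSCadetWindow.succ (hS : IsSCadetWindow S T u A B) (hu : IsCadetWindow T u A (B + 1))
    (h : ∀ x, A ≤ x → x ≤ B → IsSPair S T u x (B + 1)) : IsSCadetWindow S T u A (B + 1) := by
  refine ⟨hu, fun i j hi hij hj => ?_⟩
  rcases Nat.lt_or_ge B j with hBj | hjB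
  · obtain rfl : j = B + 1 := by omega
    exact h i hi (by omega)
  · exact hS.isSPair hi hij hjB

lemma IsSCadetWindow.pred (hS : IsSCadetWindow S T u A B) (hu : IsCadetWindow T u (A - 1) B)
    (h : ∀ y, A ≤ y → y ≤ B → IsSPair S T u (A - 1) y) : IsSCadetWindow S T u (A - 1) B := by
  refine ⟨hu, fun i j hi hij hj => ?_⟩
  rcases Nat.lt_or_ge i A with hiA | hAi
  · obtain rfl : i = A - 1 := by omega
    exact h j (by omega) hj
  · exact hS.isSPair hAi hij hj

lemma IsSPair.trans [NeZero n] (hAT : AlmostTransitive S) (hinj : WindowInj v A B) {i j k : ℕ}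
    (hAi : A ≤ i) (hij : i < j) (hjk : j < k) (hkB : k ≤ B) (hi : v i ≠ 0) (hk : v k ≠ 0)
    (h₁ : IsSPair S T v i j) (h₂ : IsSPair S T v j k) : IsSPair S T v i k := by
  have hne : ∀ p q, A ≤ p → p < q → q ≤ B → v p ≠ v q := fun p q hp hpq hq he =>
    hpq.ne (hinj p q hp (by omega) (by omega) hq he)
  have h := hAT _ _ _ (hne i j hAi hij (by omega)) (hne j k (by omega) hjk hkB)
    (hne i k hAi (hij.trans hjk) hkB) (Fin.val_ne_zero_iff.mpr hi) (Fin.val_ne_zero_iff.mpr hk)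
    _ _ h₁ h₂
  rwa [Finset.Icc_add_one_left_eq_Ioc, Finset.Icc_add_one_left_eq_Ioc,
    Finset.sum_Ioc_consecutive _ hij.le hjk.le, ← Finset.Icc_add_one_left_eq_Ioc] at h

end SPair

section MaxSCadetSet

variable {S : Fin n → Fin n → Finset ℤ} {T : PlaneTree n m} {u : ℕ → Fin n} {A B : ℕ}

lemma IsMaxSCadetSet.exists_window (h : IsMaxSCadetSet S T ((Finset.Icc A B).image u))
    (hu : IsCadetWindow T u A B) :
    ∃ k v a' b', IsMaxCadetSeq T k v ∧ IsMaxSCadetWindow S T k v a' b' ∧ u A = v a' ∧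
      B - A = b' - a' := by
  obtain ⟨k, v, a', b', hmax, -, hmw, him⟩ := h
  exact ⟨k, v, a', b', hmax, hmw, hu.head_eq_and_length_eq hmw.2.1.1 him⟩

lemma IsMaxSCadetSet.isSCadetWindow (h : IsMaxSCadetSet S T ((Finset.Icc A B).image u))
    (hu : IsCadetWindow T u A B) : IsSCadetWindow S T u A B := by
  obtain ⟨k, v, a', b', -, hmw, hhead, hlen⟩ := h.exists_window hu
  exact IsSCadetWindow.of_head_eq hu hmw.2.1 hlen.le hhead

lemma IsMaxSCadetSet.exists_not_isSPair_succ
    (h : IsMaxSCadetSet S T ((Finset.Icc A B).image u)) (hAB : A ≤ B)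
    (hu : IsCadetWindow T u A (B + 1)) : ∃ x, A ≤ x ∧ x ≤ B ∧ ¬ IsSPair S T u x (B + 1) := by
  have huB := hu.mono le_rfl hAB (Nat.le_succ B)
  obtain ⟨k, v, a', b', hmax, hmw, hhead, hlen⟩ := h.exists_window huB
  have hv := hmw.2.1.1
  have := hv.2.1
  have hb'k : b' < k := by
    have htail := huB.eq_of_head_eq hv hhead (q := B - A) (by omega) (by omega)
    rw [Nat.add_sub_cancel' hAB, show a' + (B - A) = b' by omega] at htail
    have hchild : T.IsChild (u (B + 1)) (v b') := by
      simpa [htail] using (hu.2.2 (B + 1) (by omega) le_rfl).1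
    exact hmw.1.lt_of_ne fun hb' => hmax.2.1 _ (hb' ▸ hchild)
  by_contra! hno
  have hSv := IsSCadetWindow.of_head_eq (hmax.1.mono hv.1 (by omega) hb'k)
    ((h.isSCadetWindow huB).succ hu hno) (by omega) hhead.symm
  exact hmw.2.2.2.resolve_left hb'k.ne hSv

lemma IsMaxSCadetSet.exists_not_isSPair_pred
    (h : IsMaxSCadetSet S T ((Finset.Icc A B).image u)) (hAB : A ≤ B)
    (hu : IsCadetWindow T u (A - 1) B) : ∃ y, A ≤ y ∧ y ≤ B ∧ ¬ IsSPair S T u (A - 1) y := by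
  have huB := hu.mono (Nat.sub_le A 1) hAB le_rfl
  obtain ⟨k, v, a', b', hmax, hmw, hhead, hlen⟩ := h.exists_window huB
  have hv := hmw.2.1.1
  have := hv.1
  have := hv.2.1
  have := hmw.1
  have := hu.1
  have hcu : T.IsCadet (u (A - 1)) (u A) := hu.2.2 A (by have := hu.1; omega) hAB
  have ha' : a' ≠ 1 := fun ha' => hmax.2.2 (u (A - 1)) (by subst ha'; rwa [← hhead])
  have hcv : T.IsCadet (v (a' - 1)) (v a') := hmax.1.2.2 a' (by omega) (by omega)
  have hprev : u (A - 1) = v (a' - 1) := by rw [← hcu.1.2, ← hcv.1.2, hhead]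
  by_contra! hno
  have hSv := IsSCadetWindow.of_head_eq (hmax.1.mono (by omega) (by omega) hmw.1)
    ((h.isSCadetWindow huB).pred hu hno) (by omega) hprev.symm
  exact hmw.2.2.1.resolve_left ha' hSv

end MaxSCadetSet

theorem statement_8_general {n : ℕ} [NeZero n] (S : Fin n → Fin n → Finset ℤ)
    (hAT : AlmostTransitive S) (T : PlaneTree n (mOf S))
    (a b c : ℕ) (ha : 1 ≤ a) (hc : 1 ≤ c) (u : ℕ → Fin n)
    (hcad : IsCadetWindow T u 1 (a + b + c))
    (hinj : WindowInj u 1 (a + b + c))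
    (h1 : IsMaxSCadetSet S T ((Finset.Icc 1 (a + b)).image u))
    (h2 : IsMaxSCadetSet S T ((Finset.Icc a (a + b + c)).image u)) :
    (2 ≤ a ∧ u (a - 1) = 0) ∨ u (a + b + 1) = 0 := by
  have hSL := h1.isSCadetWindow (hcad.mono le_rfl (by omega) (by omega))
  have hSR := h2.isSCadetWindow (hcad.mono ha (by omega) le_rfl)
  obtain ⟨x, hx1, hxab, hx⟩ :=
    h1.exists_not_isSPair_succ (by omega) (hcad.mono le_rfl (by omega) (by omega))
  have hxa : x < a := by
    by_contra! hax
    exact hx (hSR.isSPair hax (by omega) (by omega))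
  obtain ⟨y, hay, hyc, hy⟩ :=
    h2.exists_not_isSPair_pred (by omega) (hcad.mono (by omega) (by omega) le_rfl)
  have hya : a + b < y := by
    by_contra! hyab
    exact hy (hSL.isSPair (by omega) (by omega) hyab)
  by_contra! hne
  have hu₁ : u (a - 1) ≠ 0 := hne.1 (by omega)
  have key : IsSPair S T u (a - 1) (a + b + 1) :=
    (hSL.isSPair (by omega) (by omega) le_rfl).trans hAT hinj (by omega) (by omega)
      (by omega) (by omega) hu₁ hne.2 (hSR.isSPair (by omega) (by omega) (by omega))
  rcases (show x = a - 1 ∨ x < a - 1 by omega) with rfl | hxa'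
  · exact hx key
  rcases (show y = a + b + 1 ∨ a + b + 1 < y by omega) with rfl | hya'
  · exact hy key
  by_cases hux : u x = 0
  · have huy : u y ≠ 0 := fun huy => by
      have := hinj x y hx1 (by omega) (by omega) hyc (hux.trans huy.symm)
      omega
    exact hy (key.trans hAT hinj (by omega) (by omega) hya' hyc hu₁ huy
      (hSR.isSPair (by omega) (by omega) hyc))
  · exact hx ((hSL.isSPair hx1 hxa' (by omega)).trans hAT hinj hx1 hxa' (by omega) (by omega)
      hux hne.2 key)

/-- Corollary 4.5: if `A_S` is almost transitive and both
`(u 1, …, u (a+b))` and `(u a, …, u (a+b+c))` are maximal `S`-cadet sequences of `T`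
(for positive `a, b, c`), then `u (a-1)` or `u (a+b+1)` is the node `1`. -/
theorem statement_8 {n : ℕ} [NeZero n] (S : Fin n → Fin n → Finset ℤ)
    (hAT : AlmostTransitive S) (T : PlaneTree n (mOf S))
    (a b c : ℕ) (ha : 1 ≤ a) (hb : 1 ≤ b) (hc : 1 ≤ c) (u : ℕ → Fin n)
    (hcad : IsCadetWindow T u 1 (a + b + c))
    (hinj : WindowInj u 1 (a + b + c))
    (h1 : IsMaxSCadetSet S T ((Finset.Icc 1 (a + b)).image u))
    (h2 : IsMaxSCadetSet S T ((Finset.Icc a (a + b + c)).image u)) :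
    (2 ≤ a ∧ u (a - 1) = 0) ∨ u (a + b + 1) = 0 :=
  statement_8_general S hAT T a b c ha hc u hcad hinj h1 h2
end

section
/- Let A_S be a nested Ish arrangement in ℝ^n. Then the number of regions of A_S is r_S = ∏_{k=2}^{n} (n + 1 + |S_{1,k}| − k). -/
open scoped Classical

/-!
Index `0` plays the role of the paper's node `1`. For `k ≠ 0`, the hyperplanes relating `x k`
to `x 0` or to a coordinate of larger index are `x k = m` for the `n - 1 - k + |S 0 k|`
markers `m ∈ {x j | j > k} ∪ {x 0 - s | s ∈ S 0 k}`, and the number of markers below `x k`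
is constant on each region. These ranks determine the region: downwards in `k`, nestedness
makes the relative order of the markers of `k` a consequence of the comparisons already known
at larger indices, and a rank then says exactly which markers lie below `x k`. Every rank
vector occurs, so the regions are counted by `∏_{k ≠ 0} (n - k + |S 0 k|)`.
-/

open Finset

theorem lt_iff_lt_of_lt_iff_lt_of_ne {α β : Type*} [LinearOrder α] [LinearOrder β]
    {a b : α} {c d : β} (h : b < a ↔ d < c) (hab : a ≠ b) (hcd : c ≠ d) : a < b ↔ c < d := by
  rw [← not_iff_not, not_lt, not_lt, hab.symm.le_iff_lt, hcd.symm.le_iff_lt]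
  exact h

theorem lt_of_card_filter_lt_le {ι α β : Type*} [Fintype ι] [LinearOrder α] [LinearOrder β]
    {u : ι → α} {v : ι → β} (huv : ∀ i j, u i < u j ↔ v i < v j) {p : α} {q : β}
    (hcard : #{i | v i < q} ≤ #{i | u i < p}) {i : ι} (hi : v i < q) : u i < p := by
  by_contra hip
  have hsub : ({j | u j < p} : Finset ι) ⊆ ({j | v j < q} : Finset ι) := fun j hj => by
    simp only [mem_filter, mem_univ, true_and] at hj ⊢
    exact ((huv j i).1 (hj.trans_le (not_lt.1 hip))).trans hi
  have hssub : ({j | u j < p} : Finset ι) ⊂ ({j | v j < q} : Finset ι) :=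
    (ssubset_iff_of_subset hsub).2 ⟨i, by simpa using hi, by simpa using hip⟩
  exact (card_lt_card hssub).not_ge hcard

theorem lt_iff_lt_of_card_filter_lt_eq {ι α β : Type*} [Fintype ι] [LinearOrder α]
    [LinearOrder β] {u : ι → α} {v : ι → β} (huv : ∀ i j, u i < u j ↔ v i < v j) {p : α} {q : β}
    (hcard : #{i | u i < p} = #{i | v i < q}) (i : ι) : u i < p ↔ v i < q :=
  ⟨lt_of_card_filter_lt_le (fun i j => (huv i j).symm) hcard.le,
    lt_of_card_filter_lt_le huv hcard.ge⟩

theorem Finset.exists_notMem_card_filter_lt_eq {α : Type*} [LinearOrder α] [DenselyOrdered α]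
    [Nonempty α] [NoMinOrder α] [NoMaxOrder α] (F : Finset α) {r : ℕ} (hr : r ≤ #F) :
    ∃ p ∉ F, #(F.filter (· < p)) = r := by
  suffices h : ∀ c, (∀ b ∈ F, b < c) → ∀ r ≤ #F, ∃ p < c, p ∉ F ∧ #(F.filter (· < p)) = r by
    obtain ⟨c, hc⟩ := F.exists_le
    obtain ⟨c', hc'⟩ := exists_gt c
    obtain ⟨p, -, hp⟩ := h c' (fun b hb => (hc b hb).trans_lt hc') r hr
    exact ⟨p, hp⟩
  clear hr r
  induction F using Finset.induction_on_max with
  | empty =>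
    intro c _ r hr
    obtain ⟨p, hp⟩ := exists_lt c
    exact ⟨p, hp, notMem_empty p, by simp_all⟩
  | insert a F hF ih =>
    intro c hc r hr
    have haF : a ∉ F := fun h => lt_irrefl a (hF a h)
    have hac : a < c := hc a (mem_insert_self a F)
    rw [card_insert_of_notMem haF] at hr
    rcases hr.lt_or_eq with hr | rfl
    · obtain ⟨p, hpa, hpF, hp⟩ := ih a hF r (Nat.lt_succ_iff.1 hr)
      refine ⟨p, hpa.trans hac, by simp [hpF, hpa.ne], ?_⟩
      rwa [filter_insert, if_neg (lt_asymm hpa)]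
    · obtain ⟨p, hap, hpc⟩ := _root_.exists_between hac
      refine ⟨p, hpc, by simpa [hap.ne'] using fun h => lt_asymm hap (hF p h), ?_⟩
      rw [filter_true_of_mem fun b hb => ?_, card_insert_of_notMem haF]
      rcases mem_insert.1 hb with rfl | hb
      exacts [hap, (hF b hb).trans hap]

theorem IsClopen.mem_iff_of_connectedComponent_eq {X : Type*} [TopologicalSpace X] {s : Set X}
    (hs : IsClopen s) {x y : X} (h : connectedComponent x = connectedComponent y) :
    x ∈ s ↔ y ∈ s :=
  ⟨fun hx => hs.connectedComponent_subset hx (h ▸ mem_connectedComponent),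
    fun hy => hs.connectedComponent_subset hy (h ▸ mem_connectedComponent)⟩

theorem isClopen_setOf_lt_of_ne {X α : Type*} [TopologicalSpace X] [LinearOrder α]
    [TopologicalSpace α] [OrderClosedTopology α] {f g : X → α} (hf : Continuous f)
    (hg : Continuous g) (hfg : ∀ x, f x ≠ g x) : IsClopen {x | f x < g x} := by
  have hle : {x | f x < g x} = {x | f x ≤ g x} := Set.ext fun x => (hfg x).le_iff_lt.symm
  exact ⟨hle ▸ isClosed_le hf hg, isOpen_lt hf hg⟩

theorem connectedComponent_eq_of_convex {E : Type*} [AddCommGroup E] [Module ℝ E]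
    [TopologicalSpace E] [ContinuousAdd E] [ContinuousSMul ℝ E] {C K : Set E}
    (hK : Convex ℝ K) (hKC : K ⊆ C) {x y : C} (hx : (x : E) ∈ K) (hy : (y : E) ∈ K) :
    connectedComponent x = connectedComponent y := by
  have hpre : IsPreconnected (Subtype.val ⁻¹' K : Set C) := by
    rw [← Topology.IsInducing.subtypeVal.isPreconnected_image, Subtype.image_preimage_coe,
      Set.inter_eq_right.2 hKC]
    exact hK.isPreconnected
  exact connectedComponent_eq (hpre.subset_connectedComponent hx hy)

theorem natCard_connectedComponents_eq {X D : Type*} [TopologicalSpace X] (Φ : X → D)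
    (hΦ : ∀ x y, Φ x = Φ y ↔ connectedComponent x = connectedComponent y)
    (hsurj : Function.Surjective Φ) : Nat.card (ConnectedComponents X) = Nat.card D := by
  refine Nat.card_congr (Equiv.ofBijective (Quotient.lift Φ fun x y h => (hΦ x y).2 h) ⟨?_, ?_⟩)
  · rintro ⟨x⟩ ⟨y⟩ h
    exact ConnectedComponents.coe_eq_coe.2 ((hΦ x y).1 h)
  · exact fun d => (hsurj d).elim fun x hx => ⟨ConnectedComponents.mk x, hx⟩

namespace IshArrangement

variable {n : ℕ} [NeZero n] (S : Fin n → Fin n → Finset ℤ)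

abbrev Markers (k : Fin n) : Type := ↥(Ioi k) ⊕ ↥(S 0 k)

def markers (x : Fin n → ℝ) (k : Fin n) : Markers S k → ℝ :=
  Sum.elim (fun j => x j) (fun s => x 0 - s)

def Avoids (x : Fin n → ℝ) (k : Fin n) : Prop :=
  ∀ i, markers S x k i ≠ x k

noncomputable def rank (x : Fin n → ℝ) (k : Fin n) : ℕ :=
  #{i | markers S x k i < x k}

def rankBound (k : Fin n) : ℕ :=
  n + 1 + (S 0 k).card - ((k : ℕ) + 1)

variable {S}

theorem card_markers (k : Fin n) : Fintype.card (Markers S k) = n - 1 - k + #(S 0 k) := by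
  rw [Fintype.card_sum, Fintype.card_coe, Fintype.card_coe, Fin.card_Ioi]

theorem rank_lt_rankBound (x : Fin n → ℝ) (k : Fin n) : rank S x k < rankBound S k := by
  have h := (card_filter_le univ fun i => markers S x k i < x k).trans_eq
    (card_univ.trans (card_markers k))
  have := k.isLt
  unfold rank rankBound
  omega

theorem continuous_markers (k : Fin n) (i : Markers S k) :
    Continuous fun x : Fin n → ℝ => markers S x k i := by
  cases i <;> simp only [markers, Sum.elim_inl, Sum.elim_inr] <;> fun_prop

theorem markers_update_of_le {m k : Fin n} (hm : m ≠ 0) (hmk : m ≤ k) (x : Fin n → ℝ) (p : ℝ) :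
    markers S (Function.update x m p) k = markers S x k := by
  funext i
  cases i with
  | inl j => simp [markers, Function.update_of_ne (hmk.trans_lt (mem_Ioi.1 j.2)).ne']
  | inr s => simp [markers, Function.update_of_ne hm.symm]

theorem markers_convexCombination {a b : ℝ} (hab : a + b = 1) (z w : Fin n → ℝ) (k : Fin n)
    (i : Markers S k) :
    markers S (a • z + b • w) k i = a * markers S z k i + b * markers S w k i := by
  cases i with
  | inl j => simp [markers]
  | inr s =>
    simp only [markers, Sum.elim_inr, Pi.add_apply, Pi.smul_apply, smul_eq_mul]
    linear_combination (s.1 : ℝ) * hab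

theorem mem_complementSet_iff (hS : IshType S) {x : Fin n → ℝ} :
    x ∈ complementSet S ↔ ∀ k ≠ 0, Avoids S x k := by
  constructor
  · intro hx k hk i h
    cases i with
    | inl j =>
      have hkj := mem_Ioi.1 j.2
      exact hx k j hkj 0 (hS.1 k j hkj) (by simp_all [markers])
    | inr s =>
      exact hx 0 k ((Fin.pos_iff_ne_zero' k).2 hk) s s.2 (by simp [markers] at h; linarith)
  · intro hx i j hij s hs h
    by_cases hi : i = 0
    · subst hi
      exact hx j (ne_zero_of_lt hij) (.inr ⟨s, hs⟩) (by simp [markers]; linarith)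
    · rw [hS.2 i j ((Fin.pos_iff_ne_zero' i).2 hi) hij, mem_singleton] at hs
      subst hs
      exact hx i hi (.inl ⟨j, mem_Ioi.2 hij⟩) (by simp [markers] at h ⊢; linarith)

theorem markers_injective (hS : NestedIsh S) {x : Fin n → ℝ} {k : Fin n} (hk : k ≠ 0)
    (hx : ∀ j, k < j → Avoids S x j) : Function.Injective (markers S x k) := by
  have hnest : ∀ (j : ↥(Ioi k)) (s : ↥(S 0 k)), x j ≠ x 0 - s := fun j s h =>
    hx j (mem_Ioi.1 j.2) (.inr ⟨s, hS.2 0 k j rfl ((Fin.pos_iff_ne_zero' k).2 hk)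
      (mem_Ioi.1 j.2) s.2⟩) h.symm
  rintro (j | s) (j' | s') h <;> simp only [markers, Sum.elim_inl, Sum.elim_inr] at h
  · rcases lt_trichotomy j.1 j'.1 with hjj' | hjj' | hjj'
    · exact absurd h.symm (hx j (mem_Ioi.1 j.2) (.inl ⟨j', mem_Ioi.2 hjj'⟩))
    · exact congrArg _ (Subtype.ext hjj')
    · exact absurd h (hx j' (mem_Ioi.1 j'.2) (.inl ⟨j, mem_Ioi.2 hjj'⟩))
  · exact absurd h (hnest j s')
  · exact absurd h.symm (hnest j' s)
  · exact congrArg _ (Subtype.ext (by exact_mod_cast sub_right_injective h))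

-- Nestedness `S 0 k ⊆ S 0 j` lets level `j` compare `x j` with the marker `x 0 - s` of `k`.
theorem markers_lt_markers_iff (hS : NestedIsh S) {x y : Fin n → ℝ} {k : Fin n} (hk : k ≠ 0)
    (hx : ∀ j, k < j → Avoids S x j) (hy : ∀ j, k < j → Avoids S y j)
    (hxy : ∀ j, k < j → ∀ i, markers S x j i < x j ↔ markers S y j i < y j) (i i' : Markers S k) :
    markers S x k i < markers S x k i' ↔ markers S y k i < markers S y k i' := by
  have hnest (j : ↥(Ioi k)) (s : ↥(S 0 k)) : s.1 ∈ S 0 j :=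
    hS.2 0 k j rfl ((Fin.pos_iff_ne_zero' k).2 hk) (mem_Ioi.1 j.2) s.2
  rcases i with j | s <;> rcases i' with j' | s' <;>
    simp only [markers, Sum.elim_inl, Sum.elim_inr]
  · rcases lt_trichotomy j.1 j'.1 with h | h | h
    · exact lt_iff_lt_of_lt_iff_lt_of_ne (hxy j (mem_Ioi.1 j.2) (.inl ⟨j', mem_Ioi.2 h⟩))
        (hx j (mem_Ioi.1 j.2) (.inl ⟨j', mem_Ioi.2 h⟩)).symm
        (hy j (mem_Ioi.1 j.2) (.inl ⟨j', mem_Ioi.2 h⟩)).symm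
    · simp [h]
    · exact hxy j' (mem_Ioi.1 j'.2) (.inl ⟨j, mem_Ioi.2 h⟩)
  · exact lt_iff_lt_of_lt_iff_lt_of_ne (hxy j (mem_Ioi.1 j.2) (.inr ⟨s', hnest j s'⟩))
      (hx j (mem_Ioi.1 j.2) (.inr ⟨s', hnest j s'⟩)).symm
      (hy j (mem_Ioi.1 j.2) (.inr ⟨s', hnest j s'⟩)).symm
  · exact hxy j' (mem_Ioi.1 j'.2) (.inr ⟨s, hnest j' s⟩)
  · simp

theorem markers_lt_iff_of_rank_eq (hS : NestedIsh S) {x y : Fin n → ℝ}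
    (hx : ∀ k ≠ 0, Avoids S x k) (hy : ∀ k ≠ 0, Avoids S y k)
    (hr : ∀ k ≠ 0, rank S x k = rank S y k) (k : Fin n) (hk : k ≠ 0) (i : Markers S k) :
    markers S x k i < x k ↔ markers S y k i < y k := by
  induction k using WellFoundedGT.induction with
  | _ k ih =>
    exact lt_iff_lt_of_card_filter_lt_eq
      (markers_lt_markers_iff hS hk (fun j hj => hx j (ne_zero_of_lt hj))
        (fun j hj => hy j (ne_zero_of_lt hj)) (fun j hj => ih j hj (ne_zero_of_lt hj)))
      (hr k hk) i

variable (S) in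
-- For `x` in the complement this is the region of `A_S` containing `x`.
def markerCell (x : Fin n → ℝ) : Set (Fin n → ℝ) :=
  {z | ∀ k ≠ 0, ∀ i, if markers S x k i < x k then markers S z k i < z k
    else z k < markers S z k i}

theorem convex_markerCell (x : Fin n → ℝ) : Convex ℝ (markerCell S x) := by
  intro z hz w hw a b ha hb hab k hk i
  have hzi := hz k hk i
  have hwi := hw k hk i
  simp only [markers_convexCombination hab, Pi.add_apply, Pi.smul_apply, smul_eq_mul]
  split_ifs at hzi hwi ⊢
  all_goals
    have := convex_Ioi (0 : ℝ) (sub_pos.2 hzi) (sub_pos.2 hwi) ha hb hab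
    simp only [Set.mem_Ioi, smul_eq_mul] at this
    linarith

theorem markerCell_subset_complementSet (hS : IshType S) (x : Fin n → ℝ) :
    markerCell S x ⊆ complementSet S := by
  intro z hz
  refine (mem_complementSet_iff hS).2 fun k hk i => ?_
  have hzi := hz k hk i
  split_ifs at hzi
  exacts [hzi.ne, hzi.ne']

theorem mem_markerCell {x y : Fin n → ℝ} (hy : ∀ k ≠ 0, Avoids S y k)
    (hxy : ∀ k ≠ 0, ∀ i, markers S x k i < x k ↔ markers S y k i < y k) :
    y ∈ markerCell S x := by
  intro k hk i
  split_ifs with h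
  · exact (hxy k hk i).1 h
  · exact lt_of_le_of_ne (not_lt.1 (mt (hxy k hk i).2 h)) (hy k hk i).symm

theorem rank_eq_of_connectedComponent_eq (hS : IshType S) {x y : complementSet S}
    (h : connectedComponent x = connectedComponent y) {k : Fin n} (hk : k ≠ 0) :
    rank S x k = rank S y k := by
  unfold rank
  congr 1
  refine filter_congr fun i _ => ?_
  have hU : IsClopen {z : complementSet S | markers S z k i < (z : Fin n → ℝ) k} :=
    isClopen_setOf_lt_of_ne ((continuous_markers k i).comp continuous_subtype_val)
      ((continuous_apply k).comp continuous_subtype_val)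
      fun z => (mem_complementSet_iff hS).1 z.2 k hk i
  exact hU.mem_iff_of_connectedComponent_eq h

theorem connectedComponent_eq_iff_rank_eq (hS : NestedIsh S) {x y : complementSet S} :
    connectedComponent x = connectedComponent y ↔ ∀ k ≠ 0, rank S x k = rank S y k := by
  refine ⟨fun h k hk => rank_eq_of_connectedComponent_eq hS.1 h hk, fun h => ?_⟩
  have hx := (mem_complementSet_iff hS.1).1 x.2
  have hy := (mem_complementSet_iff hS.1).1 y.2
  exact connectedComponent_eq_of_convex (convex_markerCell x)
    (markerCell_subset_complementSet hS.1 x) (mem_markerCell hx fun _ _ _ => Iff.rfl)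
    (mem_markerCell hy (markers_lt_iff_of_rank_eq hS hx hy h))

theorem exists_value_with_rank (hS : NestedIsh S) {x : Fin n → ℝ} {m : Fin n} (hm : m ≠ 0)
    (hx : ∀ j, m < j → Avoids S x j) {r : ℕ} (hr : r < rankBound S m) :
    ∃ p, (∀ i, markers S x m i ≠ p) ∧ #{i | markers S x m i < p} = r := by
  have hinj := markers_injective hS hm hx
  have hcard : #(univ.image (markers S x m)) = n - 1 - m + #(S 0 m) := by
    rw [card_image_of_injective _ hinj, card_univ, card_markers]
  obtain ⟨p, hpF, hp⟩ := (univ.image (markers S x m)).exists_notMem_card_filter_lt_eq (r := r)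
    (by rw [hcard]; unfold rankBound at hr; have := m.isLt; omega)
  refine ⟨p, fun i h => hpF (h ▸ mem_image_of_mem _ (mem_univ i)), ?_⟩
  rwa [filter_image, card_image_of_injective _ hinj] at hp

-- Induction on the number `t` of coordinates placed so far, from `x (n-1)` downwards.
theorem exists_mem_complementSet_rank_eq (hS : NestedIsh S) (r : Fin n → ℕ)
    (hr : ∀ k ≠ 0, r k < rankBound S k) :
    ∃ x ∈ complementSet S, ∀ k ≠ 0, rank S x k = r k := by
  suffices h : ∀ t : ℕ, ∃ x : Fin n → ℝ,
      ∀ k : Fin n, k ≠ 0 → n ≤ k + t → Avoids S x k ∧ rank S x k = r k by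
    obtain ⟨x, hx⟩ := h n
    exact ⟨x, (mem_complementSet_iff hS.1).2 fun k hk => (hx k hk (by omega)).1,
      fun k hk => (hx k hk (by omega)).2⟩
  intro t
  induction t with
  | zero => exact ⟨0, fun k _ hkn => absurd hkn (by have := k.isLt; omega)⟩
  | succ t ih =>
    obtain ⟨x, hx⟩ := ih
    by_cases ht : t + 1 < n
    · let m : Fin n := ⟨n - (t + 1), by omega⟩
      have hmv : (m : ℕ) = n - (t + 1) := rfl
      have hm : m ≠ 0 := Fin.val_ne_zero_iff.1 (by omega)
      obtain ⟨p, hp, hpr⟩ := exists_value_with_rank hS hm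
        (fun j hj => (hx j (ne_zero_of_lt hj) (by rw [Fin.lt_def] at hj; omega)).1) (hr m hm)
      refine ⟨Function.update x m p, fun k hk hkt => ?_⟩
      rcases eq_or_ne k m with rfl | hkm
      · simp only [Avoids, rank, markers_update_of_le hm le_rfl, Function.update_self]
        exact ⟨hp, hpr⟩
      · have hmk : m < k := by
          rw [Fin.lt_def]
          have : (k : ℕ) ≠ m := Fin.val_ne_iff.2 hkm
          omega
        simp only [Avoids, rank, markers_update_of_le hm hmk.le, Function.update_of_ne hkm]
        exact hx k hk (by rw [Fin.lt_def] at hmk; omega)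
    · refine ⟨x, fun k hk _ => hx k hk ?_⟩
      have : (k : ℕ) ≠ 0 := Fin.val_ne_zero_iff.2 hk
      omega

end IshArrangement

/-- The paper's label `k` is the index `j : Fin n` with `(j : ℕ) + 1 = k`. -/
theorem statement_14 {n : ℕ} [NeZero n] (S : Fin n → Fin n → Finset ℤ) (hS : NestedIsh S) :
    numRegions S = ∏ j ∈ Finset.univ.filter (fun j : Fin n => j ≠ 0),
      (n + 1 + (S 0 j).card - ((j : ℕ) + 1)) := by
  let Φ : complementSet S → ∀ k : {k : Fin n // k ≠ 0}, Fin (IshArrangement.rankBound S k.1) :=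
    fun x k => ⟨IshArrangement.rank S x k.1, IshArrangement.rank_lt_rankBound x k.1⟩
  have hΦ : ∀ x y, Φ x = Φ y ↔ connectedComponent x = connectedComponent y := by
    intro x y
    rw [IshArrangement.connectedComponent_eq_iff_rank_eq hS]
    exact ⟨fun h k hk => Fin.ext_iff.1 (congrFun h ⟨k, hk⟩),
      fun h => funext fun k => Fin.ext (h k.1 k.2)⟩
  have hsurj : Function.Surjective Φ := by
    intro d
    obtain ⟨x, hx, hxd⟩ := IshArrangement.exists_mem_complementSet_rank_eq hS
      (fun k => if hk : k = 0 then 0 else d ⟨k, hk⟩)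
      (fun k hk => by simp [hk])
    exact ⟨⟨x, hx⟩, funext fun k => Fin.ext (by simpa [k.2] using hxd k k.2)⟩
  rw [numRegions, natCard_connectedComponents_eq Φ hΦ hsurj, Nat.card_pi]
  simp only [Nat.card_eq_fintype_card, Fintype.card_fin]
  exact (Finset.prod_subtype _ (by simp) _).symm
end
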